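/- arXiv:2410.05634 — 9 statements merged into one kernel-verified Lean document; each statement's English description precedes it below -/
import Mathlib

section
/- Let A be a real p×d matrix with rank(A) = d₁ and B a real q×d matrix with rank(B) = d₂, and suppose every column of A and every column of B is nonzero. Let g₁,…,g_K ∈ ℝ^d, set G_k = diag(g_k) and G = Σ_{k=1}^K g_k g_kᵀ, and assume every diagonal entry of G is nonzero. Define M₁ = A (Σ_{k=1}^K G_k Bᵀ B G_k) Aᵀ and M₂ = B (Σ_{k=1}^K G_k Aᵀ A G_k) Bᵀ. Then: (i) if max{R(G) + d₂, R(BᵀB) + rank(G)} > d, then rank(M₁) = d₁; (ii) if max{R(G) + d₁, R(AᵀA) + rank(G)} > d, then rank(M₂) = d₂. -/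
/-!
Write `Γ` for the matrix with rows `g k`, so that `G = Γᵀ * Γ`, and `C` for the vertical stack of
the blocks `B * diagonal (g k)`. The middle factor of `M₁` is `Cᵀ * C`, hence
`rank M₁ = rank (C * Aᵀ)`, and this is `rank A` as soon as `C` is injective.

Suppose `C x = 0` with `x ≠ 0`, i.e. `B` kills every `x ∘ g k`; with `W = Γ * diagonal x` this is
`B * Wᵀ = 0`, so `rank W + rank B ≤ d`. The vectors supported on `s = supp x` and orthogonal to
every `g k` form a subspace `N ≤ ker G` with `rank W + dim N = |s|`. A subspace of `ker H` of
dimension `t ≥ 1` supported on `s` contains a nonzero vector vanishing on `t - 1` given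
coordinates of `s`, so `R(H) + t ≤ |s|`. Applied to `N ≤ ker G` and to `range Wᵀ ≤ ker (Bᵀ * B)`
this gives `R(G) + rank B ≤ d` and `R(Bᵀ * B) + rank G ≤ d`. The degenerate cases `N = 0` and
`Wᵀ = 0` are excluded by the nonzero columns of `B` and the nonzero diagonal of `G`.
Part (ii) is part (i) with `A` and `B` exchanged.
-/

open Matrix

/-- `maxIndepCols H` is the largest `k ≤ n` such that every set of `k` columns of `H`
is linearly independent (the quantity `R(H)` of the paper). -/
noncomputable def maxIndepCols {m n : ℕ} (H : Matrix (Fin m) (Fin n) ℝ) : ℕ :=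
  sSup {k | k ≤ n ∧ ∀ s : Finset (Fin n), s.card = k →
    LinearIndependent ℝ (fun j : {x // x ∈ s} => Hᵀ j.1)}

open Module
open scoped Finset

section LinearAlgebra

variable {K : Type*} [Field K]

theorem Submodule.finrank_map_add_finrank_inf_ker {V W : Type*} [AddCommGroup V] [Module K V]
    [AddCommGroup W] [Module K W] [FiniteDimensional K V] (f : V →ₗ[K] W) (p : Submodule K V) :
    finrank K (p.map f) + finrank K ↥(p ⊓ LinearMap.ker f) = finrank K p := by
  have := LinearMap.finrank_range_add_finrank_ker (f.domRestrict p)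
  rwa [LinearMap.range_domRestrict, LinearMap.ker_domRestrict, ← Submodule.finrank_map_subtype_eq,
    Submodule.map_comap_subtype] at this

theorem Submodule.exists_ne_zero_forall_mem_eq_zero {ι : Type*} [Fintype ι]
    (N : Submodule K (ι → K)) (T : Finset ι) (hT : #T < finrank K N) :
    ∃ v ∈ N, v ≠ 0 ∧ ∀ i ∈ T, v i = 0 := by
  let restrict : N →ₗ[K] (T → K) := (LinearMap.funLeft K K (Subtype.val : T → ι)).comp N.subtype
  have hker : LinearMap.ker restrict ≠ ⊥ :=
    LinearMap.ker_ne_bot_of_finrank_lt (by rwa [finrank_fintype_fun_eq_card, Fintype.card_coe])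
  obtain ⟨v, hv, hv0⟩ := Submodule.exists_mem_ne_zero_of_ne_bot hker
  exact ⟨v, v.2, by simpa using hv0, fun i hi => congrFun (LinearMap.mem_ker.mp hv) ⟨i, hi⟩⟩

variable {l m n : Type*} [Fintype m] [Fintype n]

theorem Matrix.rank_mul_eq_right_of_injective [Fintype l] {C : Matrix l m K}
    (hC : Function.Injective C.mulVec) (M : Matrix m n K) : (C * M).rank = M.rank := by
  rw [Matrix.rank, Matrix.rank, Matrix.mulVecLin_mul, LinearMap.range_comp]
  exact (LinearEquiv.finrank_eq (Submodule.equivMapOfInjective C.mulVecLin hC _)).symm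

theorem Matrix.rank_mul_add_finrank_inf_ker (Γ : Matrix l m K) (M : Matrix m n K) :
    (Γ * M).rank + finrank K ↥(LinearMap.range M.mulVecLin ⊓ LinearMap.ker Γ.mulVecLin) =
      M.rank := by
  rw [Matrix.rank, Matrix.rank, Matrix.mulVecLin_mul, LinearMap.range_comp,
    Submodule.finrank_map_add_finrank_inf_ker]

variable [DecidableEq n]

theorem Matrix.eq_zero_of_mem_range_diagonal {x v : n → K}
    (hv : v ∈ LinearMap.range (diagonal x).mulVecLin) {i : n} (hi : x i = 0) : v i = 0 := by
  obtain ⟨u, rfl⟩ := hv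
  simp [mulVec_diagonal, hi]

theorem Matrix.range_transpose_mul_diagonal_le [Fintype l] (Γ : Matrix l n K) (x : n → K) :
    LinearMap.range (Γ * diagonal x)ᵀ.mulVecLin ≤ LinearMap.range (diagonal x).mulVecLin := by
  rw [transpose_mul, diagonal_transpose, mulVecLin_mul]
  exact LinearMap.range_comp_le_range _ _

variable [DecidableEq K]

theorem Matrix.card_support_eq_rank_diagonal (x : n → K) : #{i | x i ≠ 0} = (diagonal x).rank := by
  rw [rank_diagonal, Fintype.card_subtype]

theorem Matrix.rank_mul_diagonal_add_finrank_eq_card_support (Γ : Matrix l n K) (x : n → K) :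
    (Γ * diagonal x).rank +
        finrank K ↥(LinearMap.range (diagonal x).mulVecLin ⊓ LinearMap.ker Γ.mulVecLin) =
      #{i | x i ≠ 0} := by
  rw [card_support_eq_rank_diagonal]
  exact rank_mul_add_finrank_inf_ker Γ (diagonal x)

end LinearAlgebra

theorem linearIndependent_cols_of_card_le_maxIndepCols {m n : ℕ} (H : Matrix (Fin m) (Fin n) ℝ)
    (s : Finset (Fin n)) (hs : #s ≤ maxIndepCols H) :
    LinearIndependent ℝ (fun j : s => Hᵀ j) := by
  set S := {k | k ≤ n ∧ ∀ s : Finset (Fin n), #s = k → LinearIndependent ℝ (fun j : s => Hᵀ j)}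
  have hmem : maxIndepCols H ∈ S := by
    refine Nat.sSup_mem ⟨0, Nat.zero_le n, fun s hs => ?_⟩ ⟨n, fun k hk => hk.1⟩
    rw [Finset.card_eq_zero.mp hs]
    exact linearIndependent_empty_type
  obtain ⟨t, hst, ht⟩ := Finset.exists_superset_card_eq hs (by simpa using hmem.1)
  exact (hmem.2 t ht).comp (Set.inclusion hst) (Set.inclusion_injective hst)

theorem maxIndepCols_lt_card_of_mulVec_eq_zero {m n : ℕ} {H : Matrix (Fin m) (Fin n) ℝ}
    {v : Fin n → ℝ} (hHv : H *ᵥ v = 0) (hv : v ≠ 0) {s : Finset (Fin n)}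
    (hvs : ∀ i ∉ s, v i = 0) : maxIndepCols H < #s := by
  by_contra! hs
  have hsum : ∑ j : s, v j • Hᵀ j = 0 := by
    rw [← hHv, Finset.sum_coe_sort s (fun j => v j • Hᵀ j),
      Finset.sum_subset (Finset.subset_univ s) (fun i _ hi => by simp [hvs i hi])]
    ext i
    simp [mulVec, dotProduct, Finset.sum_apply, mul_comm]
  have hvs' := Fintype.linearIndependent_iff.mp
    (linearIndependent_cols_of_card_le_maxIndepCols H s hs) (fun j => v j) hsum
  refine hv (funext fun i => ?_)
  by_cases hi : i ∈ s
  · exact hvs' ⟨i, hi⟩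
  · exact hvs i hi

theorem maxIndepCols_add_finrank_le {m n : ℕ} {H : Matrix (Fin m) (Fin n) ℝ}
    {N : Submodule ℝ (Fin n → ℝ)} (hN : N ≤ LinearMap.ker H.mulVecLin) (hN0 : N ≠ ⊥)
    {s : Finset (Fin n)} (hNs : ∀ v ∈ N, ∀ i ∉ s, v i = 0) :
    maxIndepCols H + finrank ℝ N ≤ #s := by
  have hpos := Submodule.one_le_finrank_iff.mpr hN0
  -- if `finrank N > #s`, then `T = s` and `v` vanishes everywhere, a contradiction
  obtain ⟨T, hTs, hT⟩ := Finset.exists_subset_card_eq (min_le_right (finrank ℝ N - 1) #s)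
  obtain ⟨v, hvN, hv0, hvT⟩ := N.exists_ne_zero_forall_mem_eq_zero T (by omega)
  have hlt := maxIndepCols_lt_card_of_mulVec_eq_zero (hN hvN) hv0 (s := s \ T) fun i hi => by
    rw [Finset.mem_sdiff, not_and_not_right] at hi
    by_cases his : i ∈ s
    · exact hvT i (hi his)
    · exact hNs v hvN i his
  rw [Finset.card_sdiff_of_subset hTs] at hlt
  omega

theorem Matrix.rank_mul_transpose_mul_self_mul_transpose {K l m n : Type*} [Field K]
    [LinearOrder K] [IsStrictOrderedRing K] [Fintype l] [Fintype m] [Fintype n]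
    {C : Matrix l m K} (hC : Function.Injective C.mulVec) (A : Matrix n m K) :
    (A * (Cᵀ * C) * Aᵀ).rank = A.rank := by
  have hgram : A * (Cᵀ * C) * Aᵀ = (C * Aᵀ)ᵀ * (C * Aᵀ) := by
    simp [transpose_mul, Matrix.mul_assoc]
  rw [hgram, rank_transpose_mul_self, rank_mul_eq_right_of_injective hC, rank_transpose]

section KernelVector

variable {d : ℕ} {ι m : Type*} [Fintype ι] [Fintype m]
  {B : Matrix m (Fin d) ℝ} {Γ : Matrix ι (Fin d) ℝ} {x : Fin d → ℝ}

theorem maxIndepCols_transpose_mul_self_add_rank_le_of_mul_eq_zero (hBcol : ∀ i, Bᵀ i ≠ 0)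
    (hx : x ≠ 0) (hBW : B * (Γ * diagonal x)ᵀ = 0) :
    maxIndepCols (Γᵀ * Γ) + B.rank ≤ d := by
  have hrank := rank_mul_diagonal_add_finrank_eq_card_support Γ x
  set N := LinearMap.range (diagonal x).mulVecLin ⊓ LinearMap.ker Γ.mulVecLin
  have hrankBW := rank_add_rank_le_card_of_mul_eq_zero hBW
  rw [rank_transpose, Fintype.card_fin] at hrankBW
  by_cases hN0 : N = ⊥
  · exfalso
    rw [hN0, finrank_bot, add_zero] at hrank
    obtain ⟨i, hi⟩ : ∃ i, x i ≠ 0 := Function.ne_iff.mp hx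
    have heq := Submodule.eq_of_le_of_finrank_eq (range_transpose_mul_diagonal_le Γ x) (by
      change (Γ * diagonal x)ᵀ.rank = (diagonal x).rank
      rw [rank_transpose, hrank, card_support_eq_rank_diagonal])
    obtain ⟨c, hc⟩ : Pi.single i 1 ∈ LinearMap.range (Γ * diagonal x)ᵀ.mulVecLin :=
      heq ▸ ⟨Pi.single i (x i)⁻¹, by
        ext j; by_cases hj : j = i <;> simp [mulVec_diagonal, hj, hi]⟩
    have hBc : B *ᵥ Pi.single i 1 = 0 := by
      rw [← hc, mulVecLin_apply, mulVec_mulVec, hBW, zero_mulVec]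
    exact hBcol i (funext fun j => by simpa using congrFun hBc j)
  · have hNG : N ≤ LinearMap.ker (Γᵀ * Γ).mulVecLin := by
      rw [ker_mulVecLin_transpose_mul_self]
      exact inf_le_right
    have := maxIndepCols_add_finrank_le hNG hN0 (s := {i | x i ≠ 0}) fun v hv i hi =>
      eq_zero_of_mem_range_diagonal hv.1 (by simpa using hi)
    omega

theorem maxIndepCols_add_rank_transpose_mul_self_le_of_mul_eq_zero (hΓ : ∀ i, Γᵀ i ≠ 0)
    (hx : x ≠ 0) (hBW : B * (Γ * diagonal x)ᵀ = 0) :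
    maxIndepCols (Bᵀ * B) + (Γᵀ * Γ).rank ≤ d := by
  classical
  have hrank := rank_mul_diagonal_add_finrank_eq_card_support Γ x
  set N := LinearMap.range (diagonal x).mulVecLin ⊓ LinearMap.ker Γ.mulVecLin
  have hNG : finrank ℝ N + (Γᵀ * Γ).rank ≤ d := by
    have hnullity := LinearMap.finrank_range_add_finrank_ker Γ.mulVecLin
    rw [finrank_fin_fun] at hnullity
    have hle : N ≤ LinearMap.ker Γ.mulVecLin := inf_le_right
    have := Submodule.finrank_mono hle
    rw [rank_transpose_mul_self, Matrix.rank]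
    omega
  obtain ⟨i, hi⟩ : ∃ i, x i ≠ 0 := Function.ne_iff.mp hx
  obtain ⟨k, hk⟩ : ∃ k, Γ k i ≠ 0 := by simpa [funext_iff] using hΓ i
  have hW0 : LinearMap.range (Γ * diagonal x)ᵀ.mulVecLin ≠ ⊥ := by
    refine Submodule.ne_bot_iff _ |>.mpr ⟨_, LinearMap.mem_range_self _ (Pi.single k 1), ?_⟩
    intro h
    have := congrFun h i
    simp only [mulVecLin_apply, mulVec_single_one, col_transpose, Pi.zero_apply] at this
    rw [row_apply, mul_diagonal] at this
    exact mul_ne_zero hk hi this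
  have := maxIndepCols_add_finrank_le (H := Bᵀ * B) ?_ hW0 (s := {i | x i ≠ 0}) ?_
  · rw [← Matrix.rank, rank_transpose] at this
    omega
  · rw [ker_mulVecLin_transpose_mul_self, LinearMap.range_le_ker_iff, ← mulVecLin_mul, hBW,
      mulVecLin_zero]
  · intro v hv i hi
    exact eq_zero_of_mem_range_diagonal (range_transpose_mul_diagonal_le Γ x hv)
      (by simpa using hi)

end KernelVector

section Stack

variable {R ι m n : Type*} [CommRing R] [Fintype n] [DecidableEq n]

def Matrix.mulDiagonalStack (B : Matrix m n R) (Γ : Matrix ι n R) : Matrix (ι × m) n R :=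
  of fun p => (B * diagonal (Γ p.1)) p.2

theorem Matrix.mulDiagonalStack_transpose_mul_self [Fintype ι] [Fintype m] (B : Matrix m n R)
    (Γ : Matrix ι n R) :
    (mulDiagonalStack B Γ)ᵀ * mulDiagonalStack B Γ =
      ∑ k, diagonal (Γ k) * Bᵀ * B * diagonal (Γ k) := by
  have hblock (k : ι) : diagonal (Γ k) * Bᵀ * B * diagonal (Γ k) =
      (B * diagonal (Γ k))ᵀ * (B * diagonal (Γ k)) := by
    simp [transpose_mul, Matrix.mul_assoc]
  ext i j
  simp only [hblock, mul_apply, Fintype.sum_prod_type, Matrix.sum_apply]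
  rfl

theorem Matrix.mulDiagonalStack_mulVec_apply (B : Matrix m n R) (Γ : Matrix ι n R) (z : n → R)
    (k : ι) (j : m) : (mulDiagonalStack B Γ *ᵥ z) (k, j) = (B * (Γ * diagonal z)ᵀ) j k := by
  simp only [mulVec, dotProduct, mulDiagonalStack, of_apply, mul_diagonal]
  rw [mul_apply]
  simp only [transpose_apply, mul_diagonal]
  exact Finset.sum_congr rfl fun i _ => by ring

theorem Matrix.mulVec_mulDiagonalStack_eq_zero_iff (B : Matrix m n R) (Γ : Matrix ι n R)
    (z : n → R) : mulDiagonalStack B Γ *ᵥ z = 0 ↔ B * (Γ * diagonal z)ᵀ = 0 := by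
  rw [funext_iff, ← Matrix.ext_iff, Prod.forall, forall_comm]
  simp only [mulDiagonalStack_mulVec_apply, Pi.zero_apply, zero_apply]

end Stack

theorem rank_mul_sum_diagonal_mul_transpose_mul_diagonal_mul_transpose {d : ℕ}
    {p m ι : Type*} [Fintype p] [Fintype m] [Fintype ι]
    (A : Matrix p (Fin d) ℝ) (B : Matrix m (Fin d) ℝ) (Γ : Matrix ι (Fin d) ℝ)
    (hBcol : ∀ i, Bᵀ i ≠ 0) (hΓ : ∀ i, Γᵀ i ≠ 0)
    (hmax : d < max (maxIndepCols (Γᵀ * Γ) + B.rank) (maxIndepCols (Bᵀ * B) + (Γᵀ * Γ).rank)) :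
    (A * (∑ k, diagonal (Γ k) * Bᵀ * B * diagonal (Γ k)) * Aᵀ).rank = A.rank := by
  have hC : Function.Injective (mulDiagonalStack B Γ).mulVec := by
    refine (injective_iff_map_eq_zero (mulDiagonalStack B Γ).mulVecLin).mpr fun z hz => ?_
    by_contra hz0
    have hBW := (mulVec_mulDiagonalStack_eq_zero_iff B Γ z).mp hz
    have h₁ := maxIndepCols_transpose_mul_self_add_rank_le_of_mul_eq_zero hBcol hz0 hBW
    have h₂ := maxIndepCols_add_rank_transpose_mul_self_le_of_mul_eq_zero hΓ hz0 hBW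
    omega
  rw [← mulDiagonalStack_transpose_mul_self]
  exact rank_mul_transpose_mul_self_mul_transpose hC A

theorem stmt0 (p q d d₁ d₂ K : ℕ)
    (A : Matrix (Fin p) (Fin d) ℝ) (B : Matrix (Fin q) (Fin d) ℝ)
    (hA : A.rank = d₁) (hB : B.rank = d₂)
    (hAcol : ∀ ℓ, Aᵀ ℓ ≠ 0) (hBcol : ∀ ℓ, Bᵀ ℓ ≠ 0)
    (g : Fin K → Fin d → ℝ)
    (G : Matrix (Fin d) (Fin d) ℝ)
    (hG : G = ∑ k, Matrix.vecMulVec (g k) (g k))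
    (hGdiag : ∀ i, G i i ≠ 0)
    (M₁ : Matrix (Fin p) (Fin p) ℝ)
    (hM₁ : M₁ = A * (∑ k, Matrix.diagonal (g k) * Bᵀ * B * Matrix.diagonal (g k)) * Aᵀ)
    (M₂ : Matrix (Fin q) (Fin q) ℝ)
    (hM₂ : M₂ = B * (∑ k, Matrix.diagonal (g k) * Aᵀ * A * Matrix.diagonal (g k)) * Bᵀ) :
    (max (maxIndepCols G + d₂) (maxIndepCols (Bᵀ * B) + G.rank) > d → M₁.rank = d₁) ∧
    (max (maxIndepCols G + d₁) (maxIndepCols (Aᵀ * A) + G.rank) > d → M₂.rank = d₂) := by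
  have hGram : G = (of g)ᵀ * of g := by
    rw [hG]
    ext i j
    simp [mul_apply, vecMulVec_apply, Matrix.sum_apply]
  have hΓ : ∀ i, (of g)ᵀ i ≠ 0 := fun i hi =>
    hGdiag i (by
      rw [hGram, mul_apply]
      exact Finset.sum_eq_zero fun k _ => by simp [show g k i = 0 by simpa using congrFun hi k])
  subst hGram hM₁ hM₂ hA hB
  exact ⟨rank_mul_sum_diagonal_mul_transpose_mul_diagonal_mul_transpose A B (of g) hBcol hΓ,
    rank_mul_sum_diagonal_mul_transpose_mul_diagonal_mul_transpose B A (of g) hAcol hΓ⟩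
end

section
/- Let d ≥ 1 and K ≥ d². Let Σ₁,…,Σ_K be real d×d matrices, let c ∈ ℝ^d with c ≠ 0, and set g_k = Σ_k c for k = 1,…,K. If the d² × K matrix with columns vec(Σ₁),…,vec(Σ_K) has rank d², then rank(Σ_{k=1}^K g_k g_kᵀ) = d; equivalently, the vectors g₁,…,g_K span ℝ^d. (This is the linear-algebraic content of Proposition 2: with g_k the population cross-covariance vectors g_k = Σ_x(k)(B⊙A)ᵀω and c = (B⊙A)ᵀω ≠ 0, it yields rank(G) = d for G = Σ_k g_k g_kᵀ.) -/
/-!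
The rank hypothesis says that the `S k` span the space of all `d × d` matrices. Since `c ≠ 0`,
every vector is of the form `M c` (take `M` of rank one), so the `g k = S k c` span `ℝ^d`.
Finally `∑ k, g k g kᵀ = Gᵀ G` for the matrix `G` with rows `g k`, whose rank is the dimension
of the span of the `g k`.
-/

open Matrix

namespace Matrix

variable {K : Type*} [Field K] {m n ι : Type*}

theorem span_range_col_eq_top_of_rank_eq [Fintype m] [Fintype ι] {A : Matrix m ι K}
    (h : A.rank = Fintype.card m) :
    Submodule.span K (Set.range A.col) = ⊤ :=
  Submodule.eq_top_of_finrank_eq <| by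
    rw [← rank_eq_finrank_span_cols, h, Module.finrank_fintype_fun_eq_card]

theorem span_range_eq_top_of_rank_vectorization_eq [Fintype m] [Fintype n] [Fintype ι]
    {S : ι → Matrix m n K}
    (h : (of fun (ij : m × n) k => S k ij.1 ij.2).rank = Fintype.card m * Fintype.card n) :
    Submodule.span K (Set.range S) = ⊤ := by
  have hcols := span_range_col_eq_top_of_rank_eq (h.trans (Fintype.card_prod m n).symm)
  have hmap := congrArg
    (Submodule.map ((LinearEquiv.curry K K m n).trans (ofLinearEquiv K)).toLinearMap) hcols
  rwa [Submodule.map_span, ← Set.range_comp, Submodule.map_top, LinearEquiv.range] at hmap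

theorem mulVec_left_surjective [Fintype n] {c : n → K} (hc : c ≠ 0) :
    Function.Surjective fun M : Matrix m n K => M *ᵥ c := by
  classical
  obtain ⟨i, hci⟩ := Function.ne_iff.mp hc
  refine fun y => ⟨vecMulVec y (Pi.single i (c i)⁻¹), ?_⟩
  change vecMulVec y _ *ᵥ c = y
  rw [vecMulVec_mulVec, single_dotProduct, inv_mul_cancel₀ hci, MulOpposite.op_one, one_smul]

theorem span_range_mulVec_eq_top [Fintype n] {S : ι → Matrix m n K}
    (hS : Submodule.span K (Set.range S) = ⊤) {c : n → K} (hc : c ≠ 0) :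
    Submodule.span K (Set.range fun k => S k *ᵥ c) = ⊤ := by
  have hmap := congrArg (Submodule.map ((mulVecBilin K K).flip c)) hS
  rwa [Submodule.map_span, ← Set.range_comp, Submodule.map_top,
    LinearMap.range_eq_top_of_surjective _ (mulVec_left_surjective hc)] at hmap

theorem sum_vecMulVec_self_eq_transpose_mul_self {R : Type*} [CommSemiring R] [Fintype ι]
    (g : ι → m → R) :
    ∑ k, vecMulVec (g k) (g k) = (of g)ᵀ * of g := by
  ext a b
  simp [mul_apply, vecMulVec_apply, sum_apply]

theorem rank_sum_vecMulVec_self [LinearOrder K] [IsStrictOrderedRing K] [Fintype m] [Fintype ι]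
    (g : ι → m → K) :
    (∑ k, vecMulVec (g k) (g k)).rank = Module.finrank K (Submodule.span K (Set.range g)) := by
  rw [sum_vecMulVec_self_eq_transpose_mul_self, rank_transpose_mul_self,
    rank_eq_finrank_span_row]
  rfl

end Matrix

theorem stmt2_general (d K : ℕ)
    (S : Fin K → Matrix (Fin d) (Fin d) ℝ) (c : Fin d → ℝ) (hc : c ≠ 0)
    (g : Fin K → Fin d → ℝ) (hg : ∀ k, g k = (S k).mulVec c)
    (hrank : (Matrix.of fun (ij : Fin d × Fin d) (k : Fin K) => S k ij.1 ij.2).rank = d ^ 2) :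
    (∑ k, Matrix.vecMulVec (g k) (g k)).rank = d ∧
      Submodule.span ℝ (Set.range g) = ⊤ := by
  have hS : Submodule.span ℝ (Set.range S) = ⊤ :=
    span_range_eq_top_of_rank_vectorization_eq (by simpa [sq] using hrank)
  have hspan : Submodule.span ℝ (Set.range g) = ⊤ := by
    rw [funext hg]
    exact span_range_mulVec_eq_top hS hc
  refine ⟨?_, hspan⟩
  rw [rank_sum_vecMulVec_self, hspan, finrank_top, Module.finrank_fin_fun]

theorem stmt2 (d K : ℕ) (hd : 1 ≤ d) (hK : d ^ 2 ≤ K)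
    (S : Fin K → Matrix (Fin d) (Fin d) ℝ) (c : Fin d → ℝ) (hc : c ≠ 0)
    (g : Fin K → Fin d → ℝ) (hg : ∀ k, g k = (S k).mulVec c)
    (hrank : (Matrix.of fun (ij : Fin d × Fin d) (k : Fin K) => S k ij.1 ij.2).rank = d ^ 2) :
    (∑ k, Matrix.vecMulVec (g k) (g k)).rank = d ∧
      Submodule.span ℝ (Set.range g) = ⊤ :=
  stmt2_general d K S c hc g hg hrank
end

section
/- In the standing setup, the following three assertions hold: (i) rank(Ω) ≤ d(d−1)/2; (ii) rank(Ω) = d(d−1)/2 if and only if the d(d−1)/2 vectors vec Ψ(C_r, C_s) for 1 ≤ r < s ≤ d are linearly independent; (iii) the kernel ker(Ω) = {h ∈ ℝ^{d(d+1)/2} : Ω h = 0} has dimension d if and only if rank(Ω) = d(d−1)/2. -/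
/-! Ψ is a symmetric bilinear map, so the column space of Ω, spanned by the Ψ(W_i, W_j), is the
span of all Ψ(X, Y) with X, Y ∈ span{W_ℓ} = span{C_ℓ} (Θ is invertible). As Ψ(C, C) = 0 for a
rank-one C, this space is spanned by the d(d−1)/2 vectors Ψ(C_r, C_s) with r < s, which gives
(i) and (ii); (iii) is rank–nullity, Ω having d(d+1)/2 = d(d−1)/2 + d columns. -/

open Matrix

/-- The flattening of the 4-way array `Ψ(D,F)`: the function on quadruples `(i,j,k,ℓ)` with
value `d_{i,k} f_{j,ℓ} + d_{j,ℓ} f_{i,k} − d_{i,ℓ} f_{j,k} − d_{j,k} f_{i,ℓ}`. -/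
def vecPsi {d₁ d₂ : ℕ} (D F : Matrix (Fin d₁) (Fin d₂) ℝ) :
    Fin d₁ × Fin d₁ × Fin d₂ × Fin d₂ → ℝ :=
  fun q => D q.1 q.2.2.1 * F q.2.1 q.2.2.2 + D q.2.1 q.2.2.2 * F q.1 q.2.2.1
    - D q.1 q.2.2.2 * F q.2.1 q.2.2.1 - D q.2.1 q.2.2.1 * F q.1 q.2.2.2

open Finset in
theorem Fintype.card_subtype_fst_lt_snd {ι : Type*} [Fintype ι] [LinearOrder ι] :
    Fintype.card {p : ι × ι // p.1 < p.2} = (Fintype.card ι).choose 2 := by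
  rw [Fintype.card_subtype, ← univ_product_univ]
  exact card_product_filter_lt

theorem Fintype.card_subtype_fst_le_snd {ι : Type*} [Fintype ι] [LinearOrder ι] :
    Fintype.card {p : ι × ι // p.1 ≤ p.2} =
      Fintype.card {p : ι × ι // p.1 < p.2} + Fintype.card ι := by
  classical
  rw [Fintype.card_congr (Equiv.subtypeEquivRight fun p : ι × ι => le_iff_lt_or_eq),
    Fintype.card_subtype_or_disjoint _ _ fun _ hlt heq p hp => (hlt p hp).ne (heq p hp)]
  congr 1
  exact Fintype.card_congr
    ⟨fun p => p.1.1, fun i => ⟨(i, i), rfl⟩, fun p => by ext <;> simp [p.2], fun _ => rfl⟩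

namespace Submodule

variable {R M N P ι κ : Type*} [CommRing R] [AddCommGroup M] [Module R M]
  [AddCommGroup N] [Module R N] [AddCommGroup P] [Module R P]

theorem span_range_sum_smul_of_isUnit_det [Fintype ι] [DecidableEq ι] {A : Matrix ι ι R}
    (hA : IsUnit A.det) (f : ι → M) :
    span R (Set.range fun j => ∑ i, A i j • f i) = span R (Set.range f) := by
  refine le_antisymm (span_le.2 ?_) (span_le.2 ?_)
  · rintro _ ⟨j, rfl⟩
    exact sum_mem fun i _ => smul_mem _ _ (subset_span ⟨i, rfl⟩)
  · rintro _ ⟨k, rfl⟩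
    have hf : f k = ∑ j, A⁻¹ j k • ∑ i, A i j • f i := by
      simp only [Finset.smul_sum, smul_smul]
      rw [Finset.sum_comm]
      simp only [← Finset.sum_smul, mul_comm (A⁻¹ _ k), ← Matrix.mul_apply,
        Matrix.mul_nonsing_inv A hA, Matrix.one_apply, ite_smul, one_smul, zero_smul,
        Finset.sum_ite_eq', Finset.mem_univ, if_true]
    rw [hf]
    exact sum_mem fun j _ => smul_mem _ _ (subset_span ⟨j, rfl⟩)

theorem span_range_bilin_eq_of_span_eq (B : M →ₗ[R] N →ₗ[R] P) {f : ι → M} {g : ι → N}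
    {f' : κ → M} {g' : κ → N} (hf : span R (Set.range f) = span R (Set.range f'))
    (hg : span R (Set.range g) = span R (Set.range g')) :
    span R (Set.range fun p : ι × ι => B (f p.1) (g p.2)) =
      span R (Set.range fun p : κ × κ => B (f' p.1) (g' p.2)) := by
  rw [← Set.image2_range (fun m n => B m n), ← map₂_span_span, hf, hg, map₂_span_span,
    Set.image2_range]

variable [LinearOrder ι] {g : ι → ι → N}

theorem span_range_prod_eq_span_range_fst_le_snd (hg : ∀ i j, g i j = g j i) :
    span R (Set.range fun p : ι × ι => g p.1 p.2) =
      span R (Set.range fun p : {p : ι × ι // p.1 ≤ p.2} => g p.1.1 p.1.2) := by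
  refine le_antisymm (span_mono ?_) (span_mono ?_)
  · rintro _ ⟨⟨i, j⟩, rfl⟩
    rcases le_total i j with h | h
    · exact ⟨⟨(i, j), h⟩, rfl⟩
    · exact ⟨⟨(j, i), h⟩, hg j i⟩
  · rintro _ ⟨p, rfl⟩
    exact ⟨p.1, rfl⟩

theorem span_range_prod_eq_span_range_fst_lt_snd (hg : ∀ i j, g i j = g j i)
    (hg₀ : ∀ i, g i i = 0) :
    span R (Set.range fun p : ι × ι => g p.1 p.2) =
      span R (Set.range fun p : {p : ι × ι // p.1 < p.2} => g p.1.1 p.1.2) := by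
  refine le_antisymm (span_le.2 ?_) (span_mono ?_)
  · rintro _ ⟨⟨i, j⟩, rfl⟩
    rcases lt_trichotomy i j with h | rfl | h
    · exact subset_span ⟨⟨(i, j), h⟩, rfl⟩
    · simp only [hg₀, SetLike.mem_coe, zero_mem]
    · exact subset_span ⟨⟨(j, i), h⟩, hg j i⟩
  · rintro _ ⟨p, rfl⟩
    exact ⟨p.1, rfl⟩

end Submodule

variable {d₁ d₂ : ℕ}

theorem vecPsi_comm (D F : Matrix (Fin d₁) (Fin d₂) ℝ) : vecPsi D F = vecPsi F D := by
  ext q; simp only [vecPsi]; ring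

theorem vecPsi_vecMulVec_self (a : Fin d₁ → ℝ) (b : Fin d₂ → ℝ) :
    vecPsi (vecMulVec a b) (vecMulVec a b) = 0 := by
  ext q; simp only [vecPsi, vecMulVec_apply, Pi.zero_apply]; ring

noncomputable def vecPsiBilin :
    Matrix (Fin d₁) (Fin d₂) ℝ →ₗ[ℝ] Matrix (Fin d₁) (Fin d₂) ℝ →ₗ[ℝ]
      (Fin d₁ × Fin d₁ × Fin d₂ × Fin d₂ → ℝ) :=
  LinearMap.mk₂ ℝ vecPsi
    (fun _ _ _ => by ext; simp only [vecPsi, Matrix.add_apply, Pi.add_apply]; ring)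
    (fun _ _ _ => by ext; simp only [vecPsi, Matrix.smul_apply, Pi.smul_apply, smul_eq_mul]; ring)
    (fun _ _ _ => by ext; simp only [vecPsi, Matrix.add_apply, Pi.add_apply]; ring)
    (fun _ _ _ => by ext; simp only [vecPsi, Matrix.smul_apply, Pi.smul_apply, smul_eq_mul]; ring)

theorem span_range_vecPsi_eq_span_range_vecPsi_vecMulVec {d : ℕ} (u : Fin d → Fin d₁ → ℝ)
    (v : Fin d → Fin d₂ → ℝ) {A : Matrix (Fin d) (Fin d) ℝ} (hA : IsUnit A.det)
    {W : Fin d → Matrix (Fin d₁) (Fin d₂) ℝ} (hW : ∀ j, W j = ∑ i, A i j • vecMulVec (u i) (v i)) :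
    Submodule.span ℝ (Set.range fun p : {p : Fin d × Fin d // p.1 ≤ p.2} =>
        vecPsi (W p.1.1) (W p.1.2)) =
      Submodule.span ℝ (Set.range fun p : {p : Fin d × Fin d // p.1 < p.2} =>
        vecPsi (vecMulVec (u p.1.1) (v p.1.1)) (vecMulVec (u p.1.2) (v p.1.2))) := by
  set C := fun i => vecMulVec (u i) (v i)
  have hspan : Submodule.span ℝ (Set.range W) = Submodule.span ℝ (Set.range C) := by
    rw [funext hW]
    exact Submodule.span_range_sum_smul_of_isUnit_det hA C
  calc _ = Submodule.span ℝ (Set.range fun p : Fin d × Fin d => vecPsi (W p.1) (W p.2)) :=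
        (Submodule.span_range_prod_eq_span_range_fst_le_snd (g := fun i j => vecPsi (W i) (W j))
          fun _ _ => vecPsi_comm _ _).symm
    _ = Submodule.span ℝ (Set.range fun p : Fin d × Fin d => vecPsi (C p.1) (C p.2)) :=
        Submodule.span_range_bilin_eq_of_span_eq vecPsiBilin hspan hspan
    _ = _ := Submodule.span_range_prod_eq_span_range_fst_lt_snd
        (g := fun i j => vecPsi (C i) (C j)) (fun _ _ => vecPsi_comm _ _)
        fun i => vecPsi_vecMulVec_self (u i) (v i)

theorem stmt5_general (d d₁ d₂ : ℕ)
    (u : Fin d → Fin d₁ → ℝ) (v : Fin d → Fin d₂ → ℝ)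
    (Θ : Matrix (Fin d) (Fin d) ℝ) (hΘ : IsUnit Θ.det)
    (W : Fin d → Matrix (Fin d₁) (Fin d₂) ℝ)
    (hW : ∀ ℓ, W ℓ = ∑ i, Θ⁻¹ i ℓ • Matrix.vecMulVec (u i) (v i))
    (Ω : Matrix (Fin d₁ × Fin d₁ × Fin d₂ × Fin d₂) {pr : Fin d × Fin d // pr.1 ≤ pr.2} ℝ)
    (hΩ : ∀ idx pr, Ω idx pr = vecPsi (W pr.val.1) (W pr.val.2) idx) :
    Ω.rank ≤ d * (d - 1) / 2 ∧
    (Ω.rank = d * (d - 1) / 2 ↔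
      LinearIndependent ℝ (fun pr : {pr : Fin d × Fin d // pr.1 < pr.2} =>
        vecPsi (Matrix.vecMulVec (u pr.val.1) (v pr.val.1))
          (Matrix.vecMulVec (u pr.val.2) (v pr.val.2)))) ∧
    (Module.finrank ℝ (LinearMap.ker Ω.mulVecLin) = d ↔ Ω.rank = d * (d - 1) / 2) := by
  set P := fun pr : {pr : Fin d × Fin d // pr.1 < pr.2} =>
    vecPsi (vecMulVec (u pr.val.1) (v pr.val.1)) (vecMulVec (u pr.val.2) (v pr.val.2))
  have hcols : Ω.col = fun pr => vecPsi (W pr.val.1) (W pr.val.2) := by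
    ext pr idx; exact hΩ idx pr
  have hrank : Ω.rank = (Set.range P).finrank ℝ := by
    rw [rank_eq_finrank_span_cols, hcols,
      span_range_vecPsi_eq_span_range_vecPsi_vecMulVec u v (isUnit_nonsing_inv_det Θ hΘ) hW]
    rfl
  have hcard : Fintype.card {pr : Fin d × Fin d // pr.1 < pr.2} = d * (d - 1) / 2 := by
    rw [Fintype.card_subtype_fst_lt_snd, Fintype.card_fin, Nat.choose_two_right]
  have hnullity : Ω.rank + Module.finrank ℝ (LinearMap.ker Ω.mulVecLin) =
      Fintype.card {pr : Fin d × Fin d // pr.1 ≤ pr.2} := by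
    rw [← Module.finrank_fintype_fun_eq_card (R := ℝ)]
    exact LinearMap.finrank_range_add_finrank_ker Ω.mulVecLin
  rw [Fintype.card_subtype_fst_le_snd, hcard, Fintype.card_fin] at hnullity
  refine ⟨?_, ?_, ?_⟩
  · rw [hrank, ← hcard]
    exact finrank_range_le_card P
  · rw [hrank, linearIndependent_iff_card_eq_finrank_span, hcard, eq_comm]
  · omega

theorem stmt5 (d d₁ d₂ : ℕ) (hd : 2 ≤ d) (hd₁ : 1 ≤ d₁) (hd₂ : 1 ≤ d₂)
    (u : Fin d → Fin d₁ → ℝ) (v : Fin d → Fin d₂ → ℝ)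
    (hu : ∀ ℓ, u ℓ ⬝ᵥ u ℓ = 1) (hv : ∀ ℓ, v ℓ ⬝ᵥ v ℓ = 1)
    (hli : LinearIndependent ℝ
      (fun ℓ : Fin d => fun pr : Fin d₂ × Fin d₁ => v ℓ pr.1 * u ℓ pr.2))
    (Θ : Matrix (Fin d) (Fin d) ℝ) (hΘ : IsUnit Θ.det)
    (W : Fin d → Matrix (Fin d₁) (Fin d₂) ℝ)
    (hW : ∀ ℓ, W ℓ = ∑ i, Θ⁻¹ i ℓ • Matrix.vecMulVec (u i) (v i))
    (Ω : Matrix (Fin d₁ × Fin d₁ × Fin d₂ × Fin d₂) {pr : Fin d × Fin d // pr.1 ≤ pr.2} ℝ)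
    (hΩ : ∀ idx pr, Ω idx pr = vecPsi (W pr.val.1) (W pr.val.2) idx) :
    Ω.rank ≤ d * (d - 1) / 2 ∧
    (Ω.rank = d * (d - 1) / 2 ↔
      LinearIndependent ℝ (fun pr : {pr : Fin d × Fin d // pr.1 < pr.2} =>
        vecPsi (Matrix.vecMulVec (u pr.val.1) (v pr.val.1))
          (Matrix.vecMulVec (u pr.val.2) (v pr.val.2)))) ∧
    (Module.finrank ℝ (LinearMap.ker Ω.mulVecLin) = d ↔ Ω.rank = d * (d - 1) / 2) :=
  stmt5_general d d₁ d₂ u v Θ hΘ W hW Ω hΩ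
end

section
/- Let d ≥ 3, and let a₁,…,a_d ∈ ℝ^p and b₁,…,b_d ∈ ℝ^q be unit vectors with a₂ ∉ {a₁, −a₁}, b₂ ∉ {b₁, −b₁}, a₃ = (a₁ + a₂)/|a₁ + a₂|₂ and b₃ = (b₁ + b₂)/|b₁ + b₂|₂. Define ã_ℓ = a_ℓ and b̃_ℓ = b_ℓ for ℓ ≠ 3, ã₃ = (a₁ − a₂)/|a₁ − a₂|₂ and b̃₃ = (b₂ − b₁)/|b₁ − b₂|₂. Define the d×d matrix Ξ = (ξ_{i,j}) by: ξ_{i,i} = 1 for i ≠ 3; ξ_{3,3} = (|a₁ + a₂|₂ |b₁ + b₂|₂)/(|a₁ − a₂|₂ |b₁ − b₂|₂); ξ_{1,3} = ξ_{2,3} = −2/(|a₁ − a₂|₂ |b₁ − b₂|₂); and ξ_{i,j} = 0 otherwise. Then Ξ is invertible and for every ℓ ∈ {1,…,d}, Σ_{i=1}^d ξ_{i,ℓ} (b_i ⊗ a_i) = b̃_ℓ ⊗ ã_ℓ; that is, (B ⊙ A) Ξ = B̃ ⊙ Ã for A = (a₁,…,a_d), B = (b₁,…,b_d), Ã = (ã₁,…,ã_d),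 B̃ = (b̃₁,…,b̃_d). -/
open Matrix

theorem stmt9 (d p q : ℕ) (hd : 3 ≤ d)
    (i0 i1 i2 : Fin d) (hi0 : (i0 : ℕ) = 0) (hi1 : (i1 : ℕ) = 1) (hi2 : (i2 : ℕ) = 2)
    (a : Fin d → EuclideanSpace ℝ (Fin p)) (b : Fin d → EuclideanSpace ℝ (Fin q))
    (ha : ∀ ℓ, ‖a ℓ‖ = 1) (hb : ∀ ℓ, ‖b ℓ‖ = 1)
    (ha2 : a i1 ≠ a i0) (ha2' : a i1 ≠ -a i0)
    (hb2 : b i1 ≠ b i0) (hb2' : b i1 ≠ -b i0)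
    (ha3 : a i2 = ‖a i0 + a i1‖⁻¹ • (a i0 + a i1))
    (hb3 : b i2 = ‖b i0 + b i1‖⁻¹ • (b i0 + b i1))
    (ta : Fin d → EuclideanSpace ℝ (Fin p)) (tb : Fin d → EuclideanSpace ℝ (Fin q))
    (hta : ∀ ℓ, ℓ ≠ i2 → ta ℓ = a ℓ) (htb : ∀ ℓ, ℓ ≠ i2 → tb ℓ = b ℓ)
    (hta3 : ta i2 = ‖a i0 - a i1‖⁻¹ • (a i0 - a i1))
    (htb3 : tb i2 = ‖b i0 - b i1‖⁻¹ • (b i1 - b i0))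
    (Ξ : Matrix (Fin d) (Fin d) ℝ)
    (hΞdiag : ∀ i, i ≠ i2 → Ξ i i = 1)
    (hΞ33 : Ξ i2 i2 = (‖a i0 + a i1‖ * ‖b i0 + b i1‖) / (‖a i0 - a i1‖ * ‖b i0 - b i1‖))
    (hΞ13 : Ξ i0 i2 = -2 / (‖a i0 - a i1‖ * ‖b i0 - b i1‖))
    (hΞ23 : Ξ i1 i2 = -2 / (‖a i0 - a i1‖ * ‖b i0 - b i1‖))
    (hΞ0 : ∀ i j, i ≠ j → ¬(j = i2 ∧ (i = i0 ∨ i = i1)) → Ξ i j = 0) :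
    IsUnit Ξ.det ∧
    ∀ ℓ, (∑ i, Ξ i ℓ • (fun pr : Fin q × Fin p => b i pr.1 * a i pr.2)) =
      fun pr : Fin q × Fin p => tb ℓ pr.1 * ta ℓ pr.2 := by

  -- distinctness
  have h01 : i0 ≠ i1 := fun h => by rw [h, hi1] at hi0; omega
  have h02 : i0 ≠ i2 := fun h => by rw [h, hi2] at hi0; omega
  have h12 : i1 ≠ i2 := fun h => by rw [h, hi2] at hi1; omega
  -- nonvanishing
  have hasub : a i0 - a i1 ≠ 0 := fun h => ha2 (sub_eq_zero.mp h).symm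
  have haadd : a i0 + a i1 ≠ 0 := fun h => ha2' (neg_eq_of_add_eq_zero_right h ▸ rfl)
  have hbsub : b i0 - b i1 ≠ 0 := fun h => hb2 (sub_eq_zero.mp h).symm
  have hbadd : b i0 + b i1 ≠ 0 := fun h => hb2' (neg_eq_of_add_eq_zero_right h ▸ rfl)
  have hA : ‖a i0 - a i1‖ ≠ 0 := norm_ne_zero_iff.mpr hasub
  have hB : ‖b i0 - b i1‖ ≠ 0 := norm_ne_zero_iff.mpr hbsub
  have hG : ‖a i0 + a i1‖ ≠ 0 := norm_ne_zero_iff.mpr haadd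
  have hD : ‖b i0 + b i1‖ ≠ 0 := norm_ne_zero_iff.mpr hbadd
  constructor
  · -- Ξ is upper triangular
    have htri : Ξ.BlockTriangular id := by
      intro i j hij
      apply hΞ0
      · exact fun h => absurd (h ▸ hij) (lt_irrefl _)
      · rintro ⟨hj, hi⟩
        have : (j : ℕ) = 2 := hj ▸ hi2
        rcases hi with hi | hi
        · have : (i : ℕ) = 0 := hi ▸ hi0
          simp only [id] at hij
          omega
        · have : (i : ℕ) = 1 := hi ▸ hi1
          simp only [id] at hij
          omega
    rw [Matrix.det_of_upperTriangular htri]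
    rw [isUnit_iff_ne_zero]
    rw [Finset.prod_ne_zero_iff]
    intro i _
    by_cases hi : i = i2
    · rw [hi, hΞ33]
      exact div_ne_zero (mul_ne_zero hG hD) (mul_ne_zero hA hB)
    · rw [hΞdiag i hi]; norm_num
  · intro ℓ
    by_cases hℓ : ℓ = i2
    · subst hℓ
      funext pr
      simp only [Finset.sum_apply, Pi.smul_apply, smul_eq_mul]
      have hsub : ∑ i, Ξ i ℓ * (b i pr.1 * a i pr.2)
          = ∑ i ∈ ({i0, i1, ℓ} : Finset (Fin d)), Ξ i ℓ * (b i pr.1 * a i pr.2) := by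
        refine (Finset.sum_subset (Finset.subset_univ _) ?_).symm
        intro x _ hx
        simp only [Finset.mem_insert, Finset.mem_singleton, not_or] at hx
        rw [hΞ0 x ℓ hx.2.2 (by rintro ⟨-, h | h⟩ <;> simp_all), zero_mul]
      rw [hsub]
      rw [Finset.sum_insert (by simp [h01, h02]), Finset.sum_insert (by simp [h12]),
        Finset.sum_singleton]
      rw [hΞ13, hΞ23, hΞ33, ha3, hb3, hta3, htb3]
      simp only [PiLp.smul_apply, PiLp.add_apply, PiLp.sub_apply, smul_eq_mul]
      field_simp
      ring
    · funext pr
      simp only [Finset.sum_apply, Pi.smul_apply, smul_eq_mul]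
      rw [Finset.sum_eq_single ℓ]
      · rw [hΞdiag ℓ hℓ, hta ℓ hℓ, htb ℓ hℓ, one_mul]
      · intro i _ hi
        rw [hΞ0 i ℓ hi (by rintro ⟨h, -⟩; exact hℓ h), zero_mul]
      · intro h; exact absurd (Finset.mem_univ ℓ) h
end

section
/- Let h₁,…,h_d ∈ ℝ^{d(d+1)/2} be linearly independent, and for each i let H_i be the symmetric d×d matrix associated with h_i. Suppose there exist an invertible d×d real matrix Θ and diagonal matrices Γ_i = diag(γ_i), with γ_i ∈ ℝ^d, such that H_i = Θ Γ_i Θᵀ for every i ∈ {1,…,d}. Then the d×d matrix Γ̄ = (γ₁,…,γ_d) has rank d (i.e., Γ̄ is invertible). -/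
open Matrix

/-
Both `h ↦ symOf h` and `v ↦ Θ * diagonal v * Θᵀ` are linear and the first is injective, so every
linear relation among the `γ i` is one among the `h i`. Hence the columns `γ i` of `Γ̄` are
linearly independent.
-/

/-- The symmetric `d × d` matrix associated with a vector
`h = (h_{1,1},…,h_{1,d},h_{2,2},…,h_{d,d})ᵀ ∈ ℝ^{d(d+1)/2}`: diagonal entries `h_{i,i}`,
off-diagonal entries `h_{i,j}/2` for `i < j`. -/
noncomputable def symOf {d : ℕ} (h : {pr : Fin d × Fin d // pr.1 ≤ pr.2} → ℝ) :
    Matrix (Fin d) (Fin d) ℝ :=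
  Matrix.of fun i j =>
    if hlt : i < j then h ⟨(i, j), le_of_lt hlt⟩ / 2
    else if hgt : j < i then h ⟨(j, i), le_of_lt hgt⟩ / 2
    else h ⟨(i, j), not_lt.mp hgt⟩

noncomputable def symOfLinearMap (d : ℕ) :
    ({pr : Fin d × Fin d // pr.1 ≤ pr.2} → ℝ) →ₗ[ℝ] Matrix (Fin d) (Fin d) ℝ where
  toFun := symOf
  map_add' h h' := by
    ext i j
    simp only [symOf, of_apply, Matrix.add_apply, Pi.add_apply]
    split_ifs <;> ring
  map_smul' c h := by
    ext i j
    simp only [symOf, of_apply, Matrix.smul_apply, Pi.smul_apply, smul_eq_mul, RingHom.id_apply]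
    split_ifs <;> ring

lemma symOf_injective (d : ℕ) :
    Function.Injective (symOf : ({pr : Fin d × Fin d // pr.1 ≤ pr.2} → ℝ) → _) := by
  intro h h' heq
  funext ⟨⟨i, j⟩, hij⟩
  have hij' := congrFun (congrFun heq i) j
  simp only [symOf, of_apply] at hij'
  rcases (show i ≤ j from hij).lt_or_eq with hlt | rfl
  · simpa [dif_pos hlt] using hij'
  · simpa using hij'

lemma linearIndependent_of_mul_diagonal_mul {ι n R : Type*} [Fintype n] [DecidableEq n]
    [CommSemiring R] (A B : Matrix n n R) {γ : ι → n → R}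
    (hli : LinearIndependent R fun i => A * diagonal (γ i) * B) :
    LinearIndependent R γ :=
  hli.of_comp (LinearMap.mulRight R B ∘ₗ LinearMap.mulLeft R A ∘ₗ diagonalLinearMap n R R)

theorem stmt12_general (d : ℕ)
    (h : Fin d → ({pr : Fin d × Fin d // pr.1 ≤ pr.2} → ℝ))
    (hli : LinearIndependent ℝ h)
    (Θ : Matrix (Fin d) (Fin d) ℝ)
    (γ : Fin d → Fin d → ℝ)
    (hH : ∀ i, symOf (h i) = Θ * Matrix.diagonal (γ i) * Θᵀ) :
    (Matrix.of fun ℓ i => γ i ℓ : Matrix (Fin d) (Fin d) ℝ).rank = d ∧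
    IsUnit (Matrix.of fun ℓ i => γ i ℓ : Matrix (Fin d) (Fin d) ℝ).det := by
  have hconj : LinearIndependent ℝ fun i => Θ * diagonal (γ i) * Θᵀ := by
    rw [← funext hH]
    exact hli.map' (symOfLinearMap d) (LinearMap.ker_eq_bot.mpr (symOf_injective d))
  have hunit : IsUnit (of fun ℓ i => γ i ℓ : Matrix (Fin d) (Fin d) ℝ) :=
    linearIndependent_cols_iff_isUnit.mp (linearIndependent_of_mul_diagonal_mul Θ Θᵀ hconj)
  exact ⟨by simp [rank_of_isUnit _ hunit], (isUnit_iff_isUnit_det _).mp hunit⟩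

theorem stmt12 (d : ℕ)
    (h : Fin d → ({pr : Fin d × Fin d // pr.1 ≤ pr.2} → ℝ))
    (hli : LinearIndependent ℝ h)
    (Θ : Matrix (Fin d) (Fin d) ℝ) (hΘ : IsUnit Θ.det)
    (γ : Fin d → Fin d → ℝ)
    (hH : ∀ i, symOf (h i) = Θ * Matrix.diagonal (γ i) * Θᵀ) :
    (Matrix.of fun ℓ i => γ i ℓ : Matrix (Fin d) (Fin d) ℝ).rank = d ∧
    IsUnit (Matrix.of fun ℓ i => γ i ℓ : Matrix (Fin d) (Fin d) ℝ).det :=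
  stmt12_general d h hli Θ γ hH
end

section
/- In the Υ-setup, suppose additionally that d ≥ 2, that every column of Θ has Euclidean norm 1, and that Γ̄ is invertible. Then Υ₁ᵀΥ₂ + Υ₂ᵀΥ₁ is invertible, the matrix K := 2(Υ₀ᵀΥ₂)(Υ₁ᵀΥ₂ + Υ₂ᵀΥ₁)⁻¹(Υ₂ᵀΥ₀) is symmetric positive definite, and Γ̄* := Γ̄ K^{−1/2} satisfies (Γ̄*)ᵀ Γ̄* = I_d. Consequently, writing Γ̄* = (γ*_{ℓ,m}) (ℓ-th row, m-th column), one has ρ* := max_{k≠ℓ} |Σ_{m=1}^d γ*_{k,m} γ*_{ℓ,m}| / {(Σ_{m=1}^d (γ*_{k,m})²)^{1/2} (Σ_{m=1}^d (γ*_{ℓ,m})²)^{1/2}} = 0 and η* := max_{k≠ℓ} {1/Σ_{m=1}^d (γ*_{ℓ,m})² + 1/Σ_{m=1}^d (γ*_{k,m})²} = 2. -/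
/-!
Since `H = Θ Γ† Θᵀ` with `Γ†` diagonal, `H⁻¹ H_m = Θ⁻ᵀ Γ†⁻¹ Γ_m Θᵀ` is similar to a diagonal matrix
and `H_m H⁻¹` is its transpose. The entries of the Gram matrices `Υᵢᵀ Υⱼ` are Frobenius pairings,
i.e. traces, and these collapse to sums over the diagonal: with `M = Γ†⁻¹ Γ̄` one gets
`Υ₁ᵀ Υ₂ = Υ₂ᵀ Υ₁ = Mᵀ M` and, because the columns of `Θ` are unit vectors, `Υ₀ᵀ Υ₂ = Γ̄ᵀ M`.
Hence `K = Γ̄ᵀ Γ̄`, so `Γ̄ K^{-1/2}` is orthogonal and its rows are orthonormal.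
-/

open Matrix

namespace Matrix

variable {ι n 𝕜 : Type*}

theorem sum_smul_diagonal_transpose [Fintype ι] [DecidableEq n] [CommSemiring 𝕜]
    (Γ : Matrix n ι 𝕜) (φ : ι → 𝕜) :
    ∑ m, φ m • diagonal (Γᵀ m) = diagonal (Γ *ᵥ φ) := by
  ext i j
  rcases eq_or_ne i j with rfl | hij
  · simp [sum_apply, mulVec, dotProduct, mul_comm]
  · simp [sum_apply, hij]

theorem sum_smul_conj_diagonal_transpose [Fintype ι] [Fintype n] [DecidableEq n]
    [CommSemiring 𝕜] (Θ : Matrix n n 𝕜) (Γ : Matrix n ι 𝕜) (φ : ι → 𝕜) :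
    ∑ m, φ m • (Θ * diagonal (Γᵀ m) * Θᵀ) = Θ * diagonal (Γ *ᵥ φ) * Θᵀ := by
  simp only [← sum_smul_diagonal_transpose, Finset.mul_sum, Finset.sum_mul, Matrix.mul_smul,
    Matrix.smul_mul]

variable [Fintype n]

theorem transpose_mul_eq_trace_of_apply_eq [CommSemiring 𝕜] {X Y : Matrix (n × n) ι 𝕜}
    {A B : ι → Matrix n n 𝕜} (hX : ∀ p m, X p m = A m p.1 p.2)
    (hY : ∀ p m, Y p m = B m p.1 p.2) :
    Xᵀ * Y = of fun m m' => trace (A m * (B m')ᵀ) := by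
  ext m m'
  simp [mul_apply, trace, Fintype.sum_prod_type, hX, hY]

variable [DecidableEq n] [Field 𝕜]

theorem inv_diagonal_of_ne_zero {g : n → 𝕜} (hg : ∀ i, g i ≠ 0) :
    (diagonal g)⁻¹ = diagonal g⁻¹ := by
  refine inv_eq_right_inv ?_
  rw [diagonal_mul_diagonal, ← diagonal_one]
  exact congrArg diagonal (funext fun i => mul_inv_cancel₀ (hg i))

theorem IsSymm.mul_inv_transpose {A B : Matrix n n 𝕜} (hA : A.IsSymm) (hB : B.IsSymm) :
    (B * A⁻¹)ᵀ = A⁻¹ * B := by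
  rw [transpose_mul, transpose_nonsing_inv, hA.eq, hB.eq]

theorem isSymm_conj_diagonal (Θ : Matrix n n 𝕜) (v : n → 𝕜) :
    (Θ * diagonal v * Θᵀ).IsSymm := by
  simp [IsSymm, transpose_mul, mul_assoc]

theorem conj_diagonal_inv_mul_conj_diagonal {Θ : Matrix n n 𝕜} (hΘ : IsUnit Θ.det)
    {g : n → 𝕜} (hg : ∀ i, g i ≠ 0) (v : n → 𝕜) :
    (Θ * diagonal g * Θᵀ)⁻¹ * (Θ * diagonal v * Θᵀ) = Θᵀ⁻¹ * diagonal (g⁻¹ * v) * Θᵀ := by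
  rw [mul_inv_rev, mul_inv_rev, inv_diagonal_of_ne_zero hg]
  simp only [mul_assoc]
  rw [nonsing_inv_mul_cancel_left _ _ hΘ, ← mul_assoc (diagonal _), diagonal_mul_diagonal]
  rfl

theorem trace_conj'_diagonal_mul_conj'_diagonal {P : Matrix n n 𝕜} (hP : IsUnit P.det)
    (u v : n → 𝕜) :
    trace (P⁻¹ * diagonal u * P * (P⁻¹ * diagonal v * P)) = ∑ i, u i * v i := by
  have hcancel : P⁻¹ * diagonal u * P * (P⁻¹ * diagonal v * P) = P⁻¹ * diagonal (u * v) * P := by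
    simp only [mul_assoc, mul_nonsing_inv_cancel_left _ _ hP]
    rw [← mul_assoc (diagonal u), diagonal_mul_diagonal]
    rfl
  rw [hcancel, trace_conj' ((isUnit_iff_isUnit_det P).2 hP), trace_diagonal]
  rfl

theorem trace_conj_diagonal (Θ : Matrix n n 𝕜) (w : n → 𝕜) :
    trace (Θ * diagonal w * Θᵀ) = ∑ j, w j * ∑ i, Θ i j ^ 2 := by
  rw [trace_mul_comm, ← mul_assoc]
  simp [trace, mul_apply, diagonal_apply, Finset.mul_sum, sq, mul_comm, mul_left_comm]

theorem trace_inv_mul_conj_diagonal_mul_inv_mul_conj_diagonal {Θ : Matrix n n 𝕜}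
    (hΘ : IsUnit Θ.det) {g : n → 𝕜} (hg : ∀ i, g i ≠ 0) (u v : n → 𝕜) :
    trace ((Θ * diagonal g * Θᵀ)⁻¹ * (Θ * diagonal u * Θᵀ) *
        ((Θ * diagonal g * Θᵀ)⁻¹ * (Θ * diagonal v * Θᵀ))) =
      ∑ i, g⁻¹ i * u i * (g⁻¹ i * v i) := by
  rw [conj_diagonal_inv_mul_conj_diagonal hΘ hg, conj_diagonal_inv_mul_conj_diagonal hΘ hg,
    trace_conj'_diagonal_mul_conj'_diagonal (by rwa [det_transpose])]
  rfl

theorem trace_conj_diagonal_mul_inv_mul_conj_diagonal {Θ : Matrix n n 𝕜}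
    (hΘ : IsUnit Θ.det) (hΘcol : ∀ j, ∑ i, Θ i j ^ 2 = 1) {g : n → 𝕜} (hg : ∀ i, g i ≠ 0)
    (u v : n → 𝕜) :
    trace (Θ * diagonal u * Θᵀ * ((Θ * diagonal g * Θᵀ)⁻¹ * (Θ * diagonal v * Θᵀ))) =
      ∑ i, u i * (g⁻¹ i * v i) := by
  have hΘT : IsUnit Θᵀ.det := by rwa [det_transpose]
  have hcancel : Θ * diagonal u * Θᵀ * (Θᵀ⁻¹ * diagonal (g⁻¹ * v) * Θᵀ) =
      Θ * diagonal (u * (g⁻¹ * v)) * Θᵀ := by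
    simp only [mul_assoc, mul_nonsing_inv_cancel_left _ _ hΘT]
    rw [← mul_assoc (diagonal u), diagonal_mul_diagonal]
    rfl
  simp [conj_diagonal_inv_mul_conj_diagonal hΘ hg, hcancel, trace_conj_diagonal, hΘcol]

section Gram

variable {Θ : Matrix n n 𝕜} {g : n → 𝕜} {Γ : Matrix n ι 𝕜} {H : Matrix n n 𝕜}
  {Hm : ι → Matrix n n 𝕜} {Υ₀ Υ₁ Υ₂ : Matrix (n × n) ι 𝕜}

theorem gram_vec_inv_mul_vec_mul_inv (hΘ : IsUnit Θ.det) (hg : ∀ i, g i ≠ 0)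
    (hH : H = Θ * diagonal g * Θᵀ) (hHm : ∀ m, Hm m = Θ * diagonal (Γᵀ m) * Θᵀ)
    (hΥ₁ : ∀ p m, Υ₁ p m = (H⁻¹ * Hm m) p.1 p.2) (hΥ₂ : ∀ p m, Υ₂ p m = (Hm m * H⁻¹) p.1 p.2) :
    Υ₁ᵀ * Υ₂ = (diagonal g⁻¹ * Γ)ᵀ * (diagonal g⁻¹ * Γ) := by
  rw [transpose_mul_eq_trace_of_apply_eq hΥ₁ hΥ₂]
  ext m m'
  rw [of_apply, IsSymm.mul_inv_transpose (hH ▸ isSymm_conj_diagonal Θ g)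
    (hHm m' ▸ isSymm_conj_diagonal Θ _), hHm, hHm, hH,
    trace_inv_mul_conj_diagonal_mul_inv_mul_conj_diagonal hΘ hg]
  simp [mul_apply, diagonal_apply, mul_comm]

theorem gram_vec_vec_mul_inv (hΘ : IsUnit Θ.det) (hΘcol : ∀ j, ∑ i, Θ i j ^ 2 = 1)
    (hg : ∀ i, g i ≠ 0) (hH : H = Θ * diagonal g * Θᵀ)
    (hHm : ∀ m, Hm m = Θ * diagonal (Γᵀ m) * Θᵀ) (hΥ₀ : ∀ p m, Υ₀ p m = Hm m p.1 p.2)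
    (hΥ₂ : ∀ p m, Υ₂ p m = (Hm m * H⁻¹) p.1 p.2) :
    Υ₀ᵀ * Υ₂ = Γᵀ * (diagonal g⁻¹ * Γ) := by
  rw [transpose_mul_eq_trace_of_apply_eq hΥ₀ hΥ₂]
  ext m m'
  rw [of_apply, IsSymm.mul_inv_transpose (hH ▸ isSymm_conj_diagonal Θ g)
    (hHm m' ▸ isSymm_conj_diagonal Θ _), hHm, hHm, hH,
    trace_conj_diagonal_mul_inv_mul_conj_diagonal hΘ hΘcol hg]
  simp [mul_apply, diagonal_apply, mul_comm]

end Gram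

theorem smul_mul_mul_inv_smul_transpose_mul_self_mul {M : Matrix n n 𝕜} (hM : IsUnit M.det)
    {c : 𝕜} (hc : c ≠ 0) (X Y : Matrix n n 𝕜) :
    c • (X * M * (c • (Mᵀ * M))⁻¹ * (Mᵀ * Y)) = X * Y := by
  have hMT : IsUnit Mᵀ.det := by rwa [det_transpose]
  have hinv : (c • (Mᵀ * M))⁻¹ = c⁻¹ • (M⁻¹ * Mᵀ⁻¹) := by
    rw [← mul_inv_rev]
    exact inv_smul' _ (Units.mk0 c hc) (by rw [det_mul]; exact hMT.mul hM)
  rw [hinv]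
  simp only [Matrix.mul_smul, Matrix.smul_mul, smul_smul, mul_inv_cancel₀ hc, one_smul, mul_assoc,
    nonsing_inv_mul_cancel_left _ _ hMT, mul_nonsing_inv_cancel_left _ _ hM]

theorem sum_row_mul_row_eq_one_apply {G : Matrix n n 𝕜} (hG : Gᵀ * G = 1) (k l : n) :
    ∑ m, G k m * G l m = (1 : Matrix n n 𝕜) k l := by
  rw [← mul_eq_one_comm.1 hG, mul_apply]
  rfl

theorem posDef_transpose_mul_self {Γ : Matrix n n ℝ} (hΓ : IsUnit Γ.det) :
    (Γᵀ * Γ).PosDef := by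
  rw [← conjTranspose_eq_transpose_of_trivial]
  exact .conjTranspose_mul_self Γ (mulVec_injective_iff_isUnit.2 ((isUnit_iff_isUnit_det Γ).2 hΓ))

theorem transpose_mul_mul_inv_sqrt_eq_one {Γ S : Matrix n n ℝ} (hS : S.PosDef)
    (hSS : S * S = Γᵀ * Γ) : (Γ * S⁻¹)ᵀ * (Γ * S⁻¹) = 1 := by
  have hSdet : IsUnit S.det := hS.det_pos.ne'.isUnit
  have hSsymm : Sᵀ = S := by simpa [conjTranspose_eq_transpose_of_trivial] using hS.1.eq
  calc (Γ * S⁻¹)ᵀ * (Γ * S⁻¹) = S⁻¹ * (Γᵀ * Γ) * S⁻¹ := by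
        rw [transpose_mul, transpose_nonsing_inv, hSsymm]; simp only [mul_assoc]
    _ = 1 := by rw [← hSS, ← mul_assoc, nonsing_inv_mul _ hSdet, one_mul, mul_nonsing_inv _ hSdet]

end Matrix

theorem stmt13_general (d : ℕ)
    (Θ : Matrix (Fin d) (Fin d) ℝ) (hΘ : IsUnit Θ.det)
    (hΘcol : ∀ ℓ, ∑ i, Θ i ℓ ^ 2 = 1)
    (γ : Fin d → Fin d → ℝ) (φ : Fin d → ℝ)
    (Γbar : Matrix (Fin d) (Fin d) ℝ) (hΓbar : Γbar = Matrix.of fun ℓ m => γ m ℓ)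
    (hΓinv : IsUnit Γbar.det)
    (Γdag : Matrix (Fin d) (Fin d) ℝ) (hΓdag : Γdag = ∑ m, φ m • Matrix.diagonal (γ m))
    (hΓdaginv : IsUnit Γdag.det)
    (Hm : Fin d → Matrix (Fin d) (Fin d) ℝ)
    (hHm : ∀ m, Hm m = Θ * Matrix.diagonal (γ m) * Θᵀ)
    (H : Matrix (Fin d) (Fin d) ℝ) (hH : H = ∑ m, φ m • Hm m)
    (Υ₀ Υ₁ Υ₂ : Matrix (Fin d × Fin d) (Fin d) ℝ)
    (hΥ₀ : ∀ pr m, Υ₀ pr m = Hm m pr.1 pr.2)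
    (hΥ₁ : ∀ pr m, Υ₁ pr m = (H⁻¹ * Hm m) pr.1 pr.2)
    (hΥ₂ : ∀ pr m, Υ₂ pr m = (Hm m * H⁻¹) pr.1 pr.2)
    (Kmat : Matrix (Fin d) (Fin d) ℝ)
    (hK : Kmat = (2 : ℝ) • (Υ₀ᵀ * Υ₂ * (Υ₁ᵀ * Υ₂ + Υ₂ᵀ * Υ₁)⁻¹ * (Υ₂ᵀ * Υ₀))) :
    IsUnit (Υ₁ᵀ * Υ₂ + Υ₂ᵀ * Υ₁).det ∧
    Kmat.PosDef ∧
    ∀ S : Matrix (Fin d) (Fin d) ℝ, S.PosDef → S * S = Kmat →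
      ∀ G : Matrix (Fin d) (Fin d) ℝ, G = Γbar * S⁻¹ →
        Gᵀ * G = 1 ∧
        (∀ k ℓ : Fin d, k ≠ ℓ →
          |∑ m, G k m * G ℓ m| /
            (Real.sqrt (∑ m, G k m ^ 2) * Real.sqrt (∑ m, G ℓ m ^ 2)) = 0) ∧
        (∀ k ℓ : Fin d, k ≠ ℓ →
          1 / (∑ m, G ℓ m ^ 2) + 1 / (∑ m, G k m ^ 2) = 2) := by
  obtain rfl : γ = Γbarᵀ := by rw [hΓbar]; rfl
  rw [sum_smul_diagonal_transpose] at hΓdag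
  subst hΓdag
  simp only [hHm, sum_smul_conj_diagonal_transpose] at hH
  generalize Γbar *ᵥ φ = g at hH hΓdaginv
  have hg : ∀ ℓ, g ℓ ≠ 0 := by simpa [Finset.prod_ne_zero_iff] using hΓdaginv
  generalize hMdef : diagonal g⁻¹ * Γbar = M
  have hM : IsUnit M.det := by
    rw [← hMdef, det_mul, det_diagonal]
    exact (Finset.prod_ne_zero_iff.2 fun i _ => inv_ne_zero (hg i)).isUnit.mul hΓinv
  have h12 : Υ₁ᵀ * Υ₂ = Mᵀ * M := hMdef ▸ gram_vec_inv_mul_vec_mul_inv hΘ hg hH hHm hΥ₁ hΥ₂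
  have h02 : Υ₀ᵀ * Υ₂ = Γbarᵀ * M :=
    hMdef ▸ gram_vec_vec_mul_inv hΘ hΘcol hg hH hHm hΥ₀ hΥ₂
  have h21 : Υ₂ᵀ * Υ₁ = Mᵀ * M := by simpa [transpose_mul] using congrArg transpose h12
  have h20 : Υ₂ᵀ * Υ₀ = Mᵀ * Γbar := by simpa [transpose_mul] using congrArg transpose h02
  have hsum : Υ₁ᵀ * Υ₂ + Υ₂ᵀ * Υ₁ = (2 : ℝ) • (Mᵀ * M) := by rw [h12, h21, two_smul]
  have hKΓ : Kmat = Γbarᵀ * Γbar := by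
    rw [hK, hsum, h02, h20, smul_mul_mul_inv_smul_transpose_mul_self_mul hM two_ne_zero]
  refine ⟨?_, hKΓ ▸ posDef_transpose_mul_self hΓinv, fun S hS hSS G hG => ?_⟩
  · rw [hsum, det_smul, det_mul, det_transpose]
    exact (pow_ne_zero _ two_ne_zero).isUnit.mul (hM.mul hM)
  have hGG : Gᵀ * G = 1 := hG ▸ transpose_mul_mul_inv_sqrt_eq_one hS (hSS.trans hKΓ)
  have hrows := sum_row_mul_row_eq_one_apply hGG
  have hnorm : ∀ ℓ, ∑ m, G ℓ m ^ 2 = 1 := fun ℓ => by simpa [sq] using hrows ℓ ℓ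
  refine ⟨hGG, fun k ℓ hkℓ => ?_, fun k ℓ _ => ?_⟩
  · simp [hrows k ℓ, one_apply_ne hkℓ]
  · rw [hnorm, hnorm]
    norm_num

theorem stmt13 (d : ℕ) (hd : 2 ≤ d)
    (Θ : Matrix (Fin d) (Fin d) ℝ) (hΘ : IsUnit Θ.det)
    (hΘcol : ∀ ℓ, ∑ i, Θ i ℓ ^ 2 = 1)
    (γ : Fin d → Fin d → ℝ) (φ : Fin d → ℝ)
    (Γbar : Matrix (Fin d) (Fin d) ℝ) (hΓbar : Γbar = Matrix.of fun ℓ m => γ m ℓ)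
    (hΓinv : IsUnit Γbar.det)
    (Γdag : Matrix (Fin d) (Fin d) ℝ) (hΓdag : Γdag = ∑ m, φ m • Matrix.diagonal (γ m))
    (hΓdaginv : IsUnit Γdag.det)
    (Hm : Fin d → Matrix (Fin d) (Fin d) ℝ)
    (hHm : ∀ m, Hm m = Θ * Matrix.diagonal (γ m) * Θᵀ)
    (H : Matrix (Fin d) (Fin d) ℝ) (hH : H = ∑ m, φ m • Hm m)
    (Υ₀ Υ₁ Υ₂ : Matrix (Fin d × Fin d) (Fin d) ℝ)
    (hΥ₀ : ∀ pr m, Υ₀ pr m = Hm m pr.1 pr.2)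
    (hΥ₁ : ∀ pr m, Υ₁ pr m = (H⁻¹ * Hm m) pr.1 pr.2)
    (hΥ₂ : ∀ pr m, Υ₂ pr m = (Hm m * H⁻¹) pr.1 pr.2)
    (Kmat : Matrix (Fin d) (Fin d) ℝ)
    (hK : Kmat = (2 : ℝ) • (Υ₀ᵀ * Υ₂ * (Υ₁ᵀ * Υ₂ + Υ₂ᵀ * Υ₁)⁻¹ * (Υ₂ᵀ * Υ₀))) :
    IsUnit (Υ₁ᵀ * Υ₂ + Υ₂ᵀ * Υ₁).det ∧
    Kmat.PosDef ∧
    ∀ S : Matrix (Fin d) (Fin d) ℝ, S.PosDef → S * S = Kmat →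
      ∀ G : Matrix (Fin d) (Fin d) ℝ, G = Γbar * S⁻¹ →
        Gᵀ * G = 1 ∧
        (∀ k ℓ : Fin d, k ≠ ℓ →
          |∑ m, G k m * G ℓ m| /
            (Real.sqrt (∑ m, G k m ^ 2) * Real.sqrt (∑ m, G ℓ m ^ 2)) = 0) ∧
        (∀ k ℓ : Fin d, k ≠ ℓ →
          1 / (∑ m, G ℓ m ^ 2) + 1 / (∑ m, G k m ^ 2) = 2) :=
  stmt13_general d Θ hΘ hΘcol γ φ Γbar hΓbar hΓinv Γdag hΓdag hΓdaginv Hm hHm H hH Υ₀ Υ₁ Υ₂ hΥ₀ hΥ₁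
    hΥ₂ Kmat hK
end

section
/- Let Σ = (σ_{i,j}) be a real m×n matrix, δ > 0, ι ∈ [0,1), and s₃, s₄ > 0. Suppose Σ_{j=1}^n |σ_{i,j}|^ι ≤ s₃ for every i and Σ_{i=1}^m |σ_{i,j}|^ι ≤ s₄ for every j (with the convention 0^0 = 0). Let T_δ(Σ) be the matrix with entries σ_{i,j} · 1{|σ_{i,j}| ≥ δ}. Then ‖T_δ(Σ) − Σ‖₂ ≤ δ^{1−ι} (s₃ s₄)^{1/2}, where ‖·‖₂ denotes the spectral norm. -/
open Matrix

/-- The spectral norm (largest singular value) of a real matrix: the operator norm of the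
induced linear map between Euclidean spaces. -/
noncomputable def specNorm {m n : Type*} [Fintype m] [Fintype n] [DecidableEq n]
    (M : Matrix m n ℝ) : ℝ :=
  ‖LinearMap.toContinuousLinearMap (Matrix.toEuclideanLin M)‖

/-- `x ^ ι` for `x ≥ 0`, with the convention `0 ^ 0 = 0`. -/
noncomputable def powIota (x ι : ℝ) : ℝ := if x = 0 then 0 else x ^ ι

lemma schur {m n : Type*} [Fintype m] [Fintype n] [DecidableEq n]
    (B : Matrix m n ℝ) (R C : ℝ) (hR : 0 ≤ R) (hC : 0 ≤ C)
    (hrow : ∀ i, ∑ j, |B i j| ≤ R) (hcol : ∀ j, ∑ i, |B i j| ≤ C) :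
    specNorm B ≤ Real.sqrt (R * C) := by
  apply ContinuousLinearMap.opNorm_le_bound _ (Real.sqrt_nonneg _)
  intro x
  have hx2 : ‖x‖ ^ 2 = ∑ j, (x j) ^ 2 := by
    rw [EuclideanSpace.norm_eq, Real.sq_sqrt (by positivity)]
    simp [sq_abs]
  have key : ‖Matrix.toEuclideanLin B x‖ ^ 2 ≤ (R * C) * ‖x‖ ^ 2 := by
    have : ‖Matrix.toEuclideanLin B x‖ ^ 2 = ∑ i, (∑ j, B i j * x j) ^ 2 := by
      rw [EuclideanSpace.norm_eq, Real.sq_sqrt (by positivity)]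
      simp [Matrix.toEuclideanLin_apply, Matrix.mulVec, dotProduct, sq_abs]
    rw [this, hx2]
    calc ∑ i, (∑ j, B i j * x j) ^ 2
        ≤ ∑ i, (∑ j, |B i j|) * (∑ j, |B i j| * (x j) ^ 2) := by
          apply Finset.sum_le_sum
          intro i _
          have h1 : (∑ j, B i j * x j) ^ 2 ≤ (∑ j, |B i j| * |x j|) ^ 2 := by
            apply sq_le_sq'
            · rw [neg_le]
              calc -(∑ j, B i j * x j) = ∑ j, -(B i j * x j) := by rw [Finset.sum_neg_distrib]
                _ ≤ ∑ j, |B i j| * |x j| := Finset.sum_le_sum fun j _ => by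
                    rw [← abs_mul]; exact neg_le_abs _
            · exact Finset.sum_le_sum fun j _ => by rw [← abs_mul]; exact le_abs_self _
          refine h1.trans ?_
          exact Finset.sum_sq_le_sum_mul_sum_of_sq_eq_mul _
            (fun j _ => abs_nonneg _) (fun j _ => by positivity)
            (fun j _ => by rw [mul_pow, sq_abs (x j), sq, mul_assoc])
      _ ≤ ∑ i, R * (∑ j, |B i j| * (x j)^2) :=
          Finset.sum_le_sum fun i _ =>
            mul_le_mul_of_nonneg_right (hrow i) (by positivity)
      _ = R * ∑ j, (∑ i, |B i j|) * (x j)^2 := by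
          rw [← Finset.mul_sum, Finset.sum_comm]
          simp_rw [Finset.sum_mul]
      _ ≤ R * ∑ j, C * (x j)^2 := by
          refine mul_le_mul_of_nonneg_left (Finset.sum_le_sum fun j _ =>
            mul_le_mul_of_nonneg_right (hcol j) (sq_nonneg _)) hR
      _ = R * C * ∑ j, x j ^ 2 := by rw [← Finset.mul_sum]; ring
  calc ‖Matrix.toEuclideanLin B x‖ = Real.sqrt (‖Matrix.toEuclideanLin B x‖ ^ 2) := by
        rw [Real.sqrt_sq (norm_nonneg _)]
    _ ≤ Real.sqrt ((R*C) * ‖x‖^2) := Real.sqrt_le_sqrt key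
    _ = Real.sqrt (R*C) * ‖x‖ := by
        rw [Real.sqrt_mul (by positivity), Real.sqrt_sq (norm_nonneg _)]

theorem stmt15 (m n : ℕ) (A : Matrix (Fin m) (Fin n) ℝ) (δ ι s₃ s₄ : ℝ)
    (hδ : 0 < δ) (hι₀ : 0 ≤ ι) (hι₁ : ι < 1) (hs₃ : 0 < s₃) (hs₄ : 0 < s₄)
    (hrow : ∀ i, ∑ j, powIota |A i j| ι ≤ s₃)
    (hcol : ∀ j, ∑ i, powIota |A i j| ι ≤ s₄) :
    specNorm ((Matrix.of fun i j => if δ ≤ |A i j| then A i j else 0) - A) ≤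
      δ ^ (1 - ι) * Real.sqrt (s₃ * s₄) := by
  set B : Matrix (Fin m) (Fin n) ℝ :=
    (Matrix.of fun i j => if δ ≤ |A i j| then A i j else 0) - A with hB
  have hd : (0:ℝ) ≤ δ ^ (1 - ι) := Real.rpow_nonneg hδ.le _
  have hpow : ∀ i j, powIota |A i j| ι ≥ 0 := by
    intro i j
    unfold powIota
    split
    · exact le_refl 0
    · exact Real.rpow_nonneg (abs_nonneg _) _
  have hentry : ∀ i j, |B i j| ≤ δ ^ (1 - ι) * powIota |A i j| ι := by
    intro i j
    have hBij : B i j = if δ ≤ |A i j| then 0 else -A i j := by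
      simp only [hB, Matrix.sub_apply, Matrix.of_apply]
      split <;> ring
    rw [hBij]
    split
    · simpa using mul_nonneg hd (hpow i j)
    · rename_i h
      push_neg at h
      rw [abs_neg]
      rcases eq_or_ne (A i j) 0 with h0 | h0
      · simp [h0, powIota, mul_nonneg hd (hpow i j)]
      · have habs : (0:ℝ) < |A i j| := abs_pos.mpr h0
        have : powIota |A i j| ι = |A i j| ^ ι := by
          unfold powIota; rw [if_neg habs.ne']
        rw [this]
        calc |A i j| = |A i j| ^ (1 - ι) * |A i j| ^ ι := by
              rw [← Real.rpow_add habs]; simp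
          _ ≤ δ ^ (1 - ι) * |A i j| ^ ι := by
              refine mul_le_mul_of_nonneg_right ?_ (Real.rpow_nonneg habs.le _)
              exact Real.rpow_le_rpow habs.le h.le (by linarith)
  have key := schur B (δ ^ (1 - ι) * s₃) (δ ^ (1 - ι) * s₄)
    (mul_nonneg hd hs₃.le) (mul_nonneg hd hs₄.le)
    (fun i => by
      calc ∑ j, |B i j| ≤ ∑ j, δ ^ (1 - ι) * powIota |A i j| ι :=
            Finset.sum_le_sum fun j _ => hentry i j
        _ = δ ^ (1 - ι) * ∑ j, powIota |A i j| ι := by rw [Finset.mul_sum]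
        _ ≤ δ ^ (1 - ι) * s₃ := mul_le_mul_of_nonneg_left (hrow i) hd)
    (fun j => by
      calc ∑ i, |B i j| ≤ ∑ i, δ ^ (1 - ι) * powIota |A i j| ι :=
            Finset.sum_le_sum fun i _ => hentry i j
        _ = δ ^ (1 - ι) * ∑ i, powIota |A i j| ι := by rw [Finset.mul_sum]
        _ ≤ δ ^ (1 - ι) * s₄ := mul_le_mul_of_nonneg_left (hcol j) hd)
  refine key.trans_eq ?_
  rw [show δ ^ (1-ι) * s₃ * (δ ^ (1-ι) * s₄) = (δ ^ (1-ι))^2 * (s₃ * s₄) by ring,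
    Real.sqrt_mul (sq_nonneg _), Real.sqrt_sq hd]
end

section
/- Let h₁,…,h_d ∈ ℝ^{d(d+1)/2} be orthonormal vectors, and for each i let H_i be the symmetric d×d matrix associated with h_i. Let Υ₀ = (vec(H₁),…,vec(H_d)) be the d² × d matrix with these vectorizations as columns. Then for every x ∈ ℝ^d with |x|₂ = 1, one has 1/2 ≤ |Υ₀ x|₂² ≤ 1; equivalently, every singular value σ of Υ₀ satisfies 1/√2 ≤ σ ≤ 1. -/
/-!
`Υ₀ x` is the vectorization of the symmetric matrix of `g = ∑ i, x i • h i`, and `g` is a unit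
vector by orthonormality. A diagonal coordinate of `g` occurs once in that matrix, an off-diagonal
one twice with weight `1/2`, so the squared norm of `Υ₀ x` is `∑_{p = q} g² + (1/2) ∑_{p < q} g²`,
which lies between `|g|²/2` and `|g|²`.
-/

open Matrix

theorem Fintype.sum_sum_eq_sum_le_of_symm {α M : Type*} [Fintype α] [LinearOrder α]
    [AddCommMonoid M] (F : α → α → M) (hF : ∀ p q, F p q = F q p) :
    ∑ p, ∑ q, F p q =
      ∑ s : {pr : α × α // pr.1 ≤ pr.2},
        if s.1.1 = s.1.2 then F s.1.1 s.1.2 else 2 • F s.1.1 s.1.2 := by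
  have hlower :
      ∑ p, ∑ q, (if q < p then F p q else 0) = ∑ p, ∑ q, if p < q then F p q else 0 := by
    rw [Finset.sum_comm]
    simp_rw [hF]
  calc ∑ p, ∑ q, F p q
      = ∑ p, ∑ q, ((if p ≤ q then F p q else 0) + if q < p then F p q else 0) := by
        congr! 2 with p _ q _
        rcases le_or_gt p q with h | h
        · simp [h, not_lt.2 h]
        · simp [h, not_le.2 h]
    _ = ∑ p, ∑ q, ((if p ≤ q then F p q else 0) + if p < q then F p q else 0) := by
        simp only [Finset.sum_add_distrib, hlower]
    _ = ∑ pr : α × α,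
          if pr.1 ≤ pr.2 then (if pr.1 = pr.2 then F pr.1 pr.2 else 2 • F pr.1 pr.2) else 0 := by
        rw [Fintype.sum_prod_type]
        congr! 2 with p _ q _
        rcases lt_trichotomy p q with h | rfl | h
        · simp [h, h.le, h.ne, two_nsmul]
        · simp
        · simp [not_le.2 h, not_lt.2 h.le]
    _ = _ := by
        rw [← Finset.sum_filter]
        exact Finset.sum_subtype _ (by simp) _

theorem dotProduct_sum_smul_self_of_orthonormal {ι κ R : Type*} [Fintype ι] [DecidableEq ι]
    [Fintype κ] [CommSemiring R] (v : ι → κ → R)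
    (hv : ∀ i j, v i ⬝ᵥ v j = if i = j then 1 else 0) (x : ι → R) :
    (∑ i, x i • v i) ⬝ᵥ (∑ i, x i • v i) = x ⬝ᵥ x := by
  simp only [sum_dotProduct, dotProduct_sum, smul_dotProduct, dotProduct_smul, hv, smul_eq_mul,
    mul_ite, mul_one, mul_zero]
  simp [dotProduct]

section
variable {d : ℕ} (g : {pr : Fin d × Fin d // pr.1 ≤ pr.2} → ℝ)

theorem symOf_apply_of_lt {i j : Fin d} (hij : i < j) : symOf g i j = g ⟨(i, j), hij.le⟩ / 2 := by
  simp [symOf, hij]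

theorem symOf_apply_of_gt {i j : Fin d} (hij : j < i) : symOf g i j = g ⟨(j, i), hij.le⟩ / 2 := by
  simp [symOf, hij, not_lt.2 hij.le]

theorem symOf_apply_self (i : Fin d) : symOf g i i = g ⟨(i, i), le_rfl⟩ := by
  simp [symOf]

theorem isSymm_symOf : (symOf g).IsSymm := by
  refine Matrix.IsSymm.ext fun i j => ?_
  rcases lt_trichotomy i j with h | rfl | h
  · rw [symOf_apply_of_gt g h, symOf_apply_of_lt g h]
  · rfl
  · rw [symOf_apply_of_lt g h, symOf_apply_of_gt g h]

theorem symOf_apply_of_le (s : {pr : Fin d × Fin d // pr.1 ≤ pr.2}) :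
    symOf g s.1.1 s.1.2 = if s.1.1 = s.1.2 then g s else g s / 2 := by
  obtain ⟨⟨i, j⟩, hij⟩ := s
  rcases (show i ≤ j from hij).lt_or_eq with h | rfl
  · simp [symOf_apply_of_lt g h, h.ne]
  · simp [symOf_apply_self]

theorem symOf_sum_smul {ι : Type*} (s : Finset ι) (c : ι → ℝ)
    (f : ι → {pr : Fin d × Fin d // pr.1 ≤ pr.2} → ℝ) :
    symOf (∑ i ∈ s, c i • f i) = ∑ i ∈ s, c i • symOf (f i) := by
  ext p q
  rcases lt_trichotomy p q with h | rfl | h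
  · simp [symOf_apply_of_lt _ h, Matrix.sum_apply, Finset.sum_div, mul_div_assoc]
  · simp [symOf_apply_self, Matrix.sum_apply]
  · simp [symOf_apply_of_gt _ h, Matrix.sum_apply, Finset.sum_div, mul_div_assoc]

theorem sum_symOf_mul_self :
    ∑ p, ∑ q, symOf g p q * symOf g p q =
      ∑ s, if s.1.1 = s.1.2 then g s * g s else g s * g s / 2 := by
  rw [Fintype.sum_sum_eq_sum_le_of_symm _ fun p q => by rw [(isSymm_symOf g).apply]]
  refine Finset.sum_congr rfl fun s _ => ?_
  rw [symOf_apply_of_le]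
  split_ifs
  · rfl
  · rw [two_nsmul]
    ring

theorem dotProduct_self_div_two_le_sum_symOf_mul_self :
    g ⬝ᵥ g / 2 ≤ ∑ p, ∑ q, symOf g p q * symOf g p q := by
  rw [sum_symOf_mul_self, dotProduct, Finset.sum_div]
  refine Finset.sum_le_sum fun s _ => ?_
  split_ifs <;> nlinarith [mul_self_nonneg (g s)]

theorem sum_symOf_mul_self_le_dotProduct_self :
    ∑ p, ∑ q, symOf g p q * symOf g p q ≤ g ⬝ᵥ g := by
  rw [sum_symOf_mul_self, dotProduct]
  refine Finset.sum_le_sum fun s _ => ?_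
  split_ifs <;> nlinarith [mul_self_nonneg (g s)]
end

theorem stmt18 (d : ℕ)
    (h : Fin d → ({pr : Fin d × Fin d // pr.1 ≤ pr.2} → ℝ))
    (horth : ∀ i j, h i ⬝ᵥ h j = if i = j then (1 : ℝ) else 0)
    (Υ₀ : Matrix (Fin d × Fin d) (Fin d) ℝ)
    (hΥ₀ : ∀ pr i, Υ₀ pr i = symOf (h i) pr.1 pr.2) :
    ∀ x : Fin d → ℝ, x ⬝ᵥ x = 1 →
      1 / 2 ≤ Υ₀.mulVec x ⬝ᵥ Υ₀.mulVec x ∧ Υ₀.mulVec x ⬝ᵥ Υ₀.mulVec x ≤ 1 := by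
  intro x hx
  set g := ∑ i, x i • h i
  have hmulVec : Υ₀ *ᵥ x = fun pr => symOf g pr.1 pr.2 := by
    ext pr
    simp [mulVec, dotProduct, hΥ₀, g, symOf_sum_smul, Matrix.sum_apply, mul_comm]
  have hnorm : Υ₀ *ᵥ x ⬝ᵥ Υ₀ *ᵥ x = ∑ p, ∑ q, symOf g p q * symOf g p q := by
    rw [hmulVec, dotProduct, Fintype.sum_prod_type]
  have hg : g ⬝ᵥ g = 1 := (dotProduct_sum_smul_self_of_orthonormal h horth x).trans hx
  rw [hnorm, ← hg]
  exact ⟨dotProduct_self_div_two_le_sum_symOf_mul_self g, sum_symOf_mul_self_le_dotProduct_self g⟩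
end

section
/- In the Υ-setup, suppose additionally that every column of Θ has Euclidean norm 1 and that Γ̄ is invertible. Then Υ₀ᵀΥ₂ = Γ̄ᵀ (Γ†)⁻¹ Γ̄, Υ₂ᵀΥ₀ = Γ̄ᵀ (Γ†)⁻¹ Γ̄, and Υ₁ᵀΥ₂ = Υ₂ᵀΥ₁ = Γ̄ᵀ (Γ†)⁻² Γ̄; consequently, 2(Υ₀ᵀΥ₂)(Υ₁ᵀΥ₂ + Υ₂ᵀΥ₁)⁻¹(Υ₂ᵀΥ₀) = Γ̄ᵀΓ̄. -/
open Matrix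

private lemma sum_entrywise_eq_trace {d : ℕ} (A B : Matrix (Fin d) (Fin d) ℝ) :
    ∑ p : Fin d × Fin d, A p.1 p.2 * B p.1 p.2 = (Aᵀ * B).trace := by
  rw [Fintype.sum_prod_type]
  simp only [trace, diag_apply, mul_apply, transpose_apply]
  exact Finset.sum_comm

private lemma trace_diag_mul_mul_diag {d : ℕ} (a b : Fin d → ℝ) (M : Matrix (Fin d) (Fin d) ℝ) :
    (Matrix.diagonal a * M * Matrix.diagonal b).trace = ∑ ℓ, a ℓ * M ℓ ℓ * b ℓ := by
  simp [trace, diag_apply, mul_diagonal, diagonal_mul]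

private lemma trace_conj {d : ℕ} (Θ M : Matrix (Fin d) (Fin d) ℝ) (hΘ : IsUnit Θ.det) :
    (Θ * M * Θ⁻¹).trace = M.trace := by
  rw [Matrix.trace_mul_comm, ← Matrix.mul_assoc, Matrix.nonsing_inv_mul _ hΘ, one_mul]

private lemma helperA {d : ℕ} (Θ : Matrix (Fin d) (Fin d) ℝ) (hΘ : IsUnit Θ.det)
    (a b : Fin d → ℝ) :
    ((Θ * Matrix.diagonal a * Θᵀ) * (Θ * Matrix.diagonal b * Θ⁻¹)).trace
      = ∑ ℓ, a ℓ * (Θᵀ * Θ) ℓ ℓ * b ℓ := by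
  have h1 : (Θ * Matrix.diagonal a * Θᵀ) * (Θ * Matrix.diagonal b * Θ⁻¹)
      = Θ * (Matrix.diagonal a * (Θᵀ * Θ) * Matrix.diagonal b) * Θ⁻¹ := by
    simp only [Matrix.mul_assoc]
  rw [h1, trace_conj _ _ hΘ, trace_diag_mul_mul_diag]

private lemma helperB {d : ℕ} (Θ : Matrix (Fin d) (Fin d) ℝ) (hΘ : IsUnit Θ.det)
    (a b : Fin d → ℝ) :
    ((Θ * Matrix.diagonal a * Θ⁻¹) * (Θ * Matrix.diagonal b * Θ⁻¹)).trace
      = ∑ ℓ, a ℓ * b ℓ := by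
  have hinv : Θ⁻¹ * Θ = 1 := Matrix.nonsing_inv_mul _ hΘ
  have h1 : (Θ * Matrix.diagonal a * Θ⁻¹) * (Θ * Matrix.diagonal b * Θ⁻¹)
      = Θ * (Matrix.diagonal a * Matrix.diagonal b) * Θ⁻¹ := by
    calc (Θ * Matrix.diagonal a * Θ⁻¹) * (Θ * Matrix.diagonal b * Θ⁻¹)
        = Θ * (Matrix.diagonal a * ((Θ⁻¹ * Θ) * (Matrix.diagonal b * Θ⁻¹))) := by
          simp only [Matrix.mul_assoc]
      _ = _ := by rw [hinv, one_mul]; simp only [Matrix.mul_assoc]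
  rw [h1, trace_conj _ _ hΘ, diagonal_mul_diagonal, trace_diagonal]

theorem stmt19 (d : ℕ)
    (Θ : Matrix (Fin d) (Fin d) ℝ) (hΘ : IsUnit Θ.det)
    (hΘcol : ∀ ℓ, ∑ i, Θ i ℓ ^ 2 = 1)
    (γ : Fin d → Fin d → ℝ) (φ : Fin d → ℝ)
    (Γbar : Matrix (Fin d) (Fin d) ℝ) (hΓbar : Γbar = Matrix.of fun ℓ m => γ m ℓ)
    (hΓinv : IsUnit Γbar.det)
    (Γdag : Matrix (Fin d) (Fin d) ℝ) (hΓdag : Γdag = ∑ m, φ m • Matrix.diagonal (γ m))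
    (hΓdaginv : IsUnit Γdag.det)
    (Hm : Fin d → Matrix (Fin d) (Fin d) ℝ)
    (hHm : ∀ m, Hm m = Θ * Matrix.diagonal (γ m) * Θᵀ)
    (H : Matrix (Fin d) (Fin d) ℝ) (hH : H = ∑ m, φ m • Hm m)
    (Υ₀ Υ₁ Υ₂ : Matrix (Fin d × Fin d) (Fin d) ℝ)
    (hΥ₀ : ∀ pr m, Υ₀ pr m = Hm m pr.1 pr.2)
    (hΥ₁ : ∀ pr m, Υ₁ pr m = (H⁻¹ * Hm m) pr.1 pr.2)
    (hΥ₂ : ∀ pr m, Υ₂ pr m = (Hm m * H⁻¹) pr.1 pr.2) :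
    Υ₀ᵀ * Υ₂ = Γbarᵀ * Γdag⁻¹ * Γbar ∧
    Υ₂ᵀ * Υ₀ = Γbarᵀ * Γdag⁻¹ * Γbar ∧
    Υ₁ᵀ * Υ₂ = Γbarᵀ * (Γdag⁻¹ * Γdag⁻¹) * Γbar ∧
    Υ₂ᵀ * Υ₁ = Υ₁ᵀ * Υ₂ ∧
    (2 : ℝ) • (Υ₀ᵀ * Υ₂ * (Υ₁ᵀ * Υ₂ + Υ₂ᵀ * Υ₁)⁻¹ * (Υ₂ᵀ * Υ₀)) = Γbarᵀ * Γbar := by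
  have hΘT : IsUnit Θᵀ.det := by rwa [Matrix.det_transpose]
  set g : Fin d → ℝ := fun ℓ => ∑ m, φ m * γ m ℓ with hgdef
  have hg : Γdag = Matrix.diagonal g := by
    rw [hΓdag]
    ext i j
    rw [Matrix.sum_apply]
    by_cases h : i = j
    · subst h; simp [Matrix.diagonal_apply_eq, hgdef]
    · simp [Matrix.diagonal_apply_ne _ h]
  have hgne : ∀ ℓ, g ℓ ≠ 0 := by
    have h := hΓdaginv
    rw [hg, Matrix.det_diagonal] at h
    intro ℓ h0
    rw [Finset.prod_eq_zero (Finset.mem_univ ℓ) h0] at h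
    exact not_isUnit_zero h
  have hΓdinv : Γdag⁻¹ = Matrix.diagonal fun ℓ => (g ℓ)⁻¹ := by
    apply Matrix.inv_eq_right_inv
    rw [hg, Matrix.diagonal_mul_diagonal,
      show (fun i => g i * (g i)⁻¹) = (1 : Fin d → ℝ) from
        funext fun ℓ => mul_inv_cancel₀ (hgne ℓ)]
    exact Matrix.diagonal_one
  have hHeq : H = Θ * Γdag * Θᵀ := by
    rw [hH, hΓdag, Matrix.mul_sum, Matrix.sum_mul]
    exact Finset.sum_congr rfl fun m _ => by rw [hHm, mul_smul_comm, smul_mul_assoc]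
  have hHinv : H⁻¹ = Θᵀ⁻¹ * (Γdag⁻¹ * Θ⁻¹) := by
    rw [hHeq, Matrix.mul_inv_rev, Matrix.mul_inv_rev]
  have cT : Θᵀ * Θᵀ⁻¹ = 1 := Matrix.mul_nonsing_inv _ hΘT
  have hU2 : ∀ n, Hm n * H⁻¹ = Θ * (Matrix.diagonal (γ n) * Γdag⁻¹) * Θ⁻¹ := by
    intro n
    rw [hHm, hHinv]
    simp only [Matrix.mul_assoc]
    rw [← Matrix.mul_assoc Θᵀ, cT, one_mul]
  have hHmsym : ∀ k, (Hm k)ᵀ = Hm k := by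
    intro k
    rw [hHm]
    simp [Matrix.transpose_mul, Matrix.mul_assoc]
  have hHsym : Hᵀ = H := by
    rw [hHeq, hg]
    simp [Matrix.transpose_mul, Matrix.mul_assoc]
  have hU1T : ∀ k, (H⁻¹ * Hm k)ᵀ = Hm k * H⁻¹ := by
    intro k
    rw [Matrix.transpose_mul, hHmsym, Matrix.transpose_nonsing_inv, hHsym]
  have hGdiag : ∀ ℓ, (Θᵀ * Θ) ℓ ℓ = 1 := by
    intro ℓ
    rw [Matrix.mul_apply]
    simpa [sq] using hΘcol ℓ
  -- part 1
  have p1 : Υ₀ᵀ * Υ₂ = Γbarᵀ * Γdag⁻¹ * Γbar := by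
    ext m n
    have lhs : (Υ₀ᵀ * Υ₂) m n = ((Hm m)ᵀ * (Hm n * H⁻¹)).trace := by
      rw [Matrix.mul_apply]
      simp only [Matrix.transpose_apply, hΥ₀, hΥ₂]
      exact sum_entrywise_eq_trace _ _
    rw [lhs, hHmsym, hHm m, hU2 n, hΓdinv, Matrix.diagonal_mul_diagonal, helperA Θ hΘ,
      Matrix.mul_apply]
    simp only [Matrix.mul_diagonal, Matrix.transpose_apply, hΓbar, Matrix.of_apply]
    refine Finset.sum_congr rfl fun ℓ _ => ?_
    rw [hGdiag ℓ]
    ring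
  -- part 2
  have p2 : Υ₂ᵀ * Υ₀ = Γbarᵀ * Γdag⁻¹ * Γbar := by
    have ht : Υ₂ᵀ * Υ₀ = (Υ₀ᵀ * Υ₂)ᵀ := by
      rw [Matrix.transpose_mul, Matrix.transpose_transpose]
    rw [ht, p1, hΓdinv]
    simp [Matrix.transpose_mul, Matrix.mul_assoc]
  -- part 3
  have p3 : Υ₁ᵀ * Υ₂ = Γbarᵀ * (Γdag⁻¹ * Γdag⁻¹) * Γbar := by
    ext m n
    have lhs : (Υ₁ᵀ * Υ₂) m n = ((H⁻¹ * Hm m)ᵀ * (Hm n * H⁻¹)).trace := by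
      rw [Matrix.mul_apply]
      simp only [Matrix.transpose_apply, hΥ₁, hΥ₂]
      exact sum_entrywise_eq_trace _ _
    rw [lhs, hU1T, hU2 m, hU2 n, hΓdinv]
    simp only [Matrix.diagonal_mul_diagonal]
    rw [helperB Θ hΘ, Matrix.mul_apply]
    simp only [Matrix.mul_diagonal, Matrix.transpose_apply, hΓbar, Matrix.of_apply]
    exact Finset.sum_congr rfl fun ℓ _ => by ring
  -- part 4
  have p4 : Υ₂ᵀ * Υ₁ = Υ₁ᵀ * Υ₂ := by
    have ht : Υ₂ᵀ * Υ₁ = (Υ₁ᵀ * Υ₂)ᵀ := by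
      rw [Matrix.transpose_mul, Matrix.transpose_transpose]
    rw [ht, p3, hΓdinv]
    simp [Matrix.transpose_mul, Matrix.mul_assoc]
  -- part 5
  have hΓbT : IsUnit Γbarᵀ.det := by rwa [Matrix.det_transpose]
  have cb : ∀ X : Matrix (Fin d) (Fin d) ℝ, Γbar * (Γbar⁻¹ * X) = X := fun X => by
    rw [← Matrix.mul_assoc, Matrix.mul_nonsing_inv _ hΓinv, one_mul]
  have cbT : ∀ X : Matrix (Fin d) (Fin d) ℝ, Γbarᵀ⁻¹ * (Γbarᵀ * X) = X := fun X => by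
    rw [← Matrix.mul_assoc, Matrix.nonsing_inv_mul _ hΓbT, one_mul]
  have cdi : ∀ X : Matrix (Fin d) (Fin d) ℝ, Γdag⁻¹ * (Γdag * X) = X := fun X => by
    rw [← Matrix.mul_assoc, Matrix.nonsing_inv_mul _ hΓdaginv, one_mul]
  have cd : ∀ X : Matrix (Fin d) (Fin d) ℝ, Γdag * (Γdag⁻¹ * X) = X := fun X => by
    rw [← Matrix.mul_assoc, Matrix.mul_nonsing_inv _ hΓdaginv, one_mul]
  have cbT1 : Γbarᵀ * Γbarᵀ⁻¹ = 1 := Matrix.mul_nonsing_inv _ hΓbT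
  have hBinv : (Υ₁ᵀ * Υ₂ + Υ₂ᵀ * Υ₁)⁻¹
      = (2⁻¹ : ℝ) • (Γbar⁻¹ * (Γdag * Γdag) * Γbarᵀ⁻¹) := by
    apply Matrix.inv_eq_right_inv
    rw [p4, p3, ← two_smul ℝ, Matrix.smul_mul, Matrix.mul_smul, smul_smul,
      show (2 : ℝ) * 2⁻¹ = 1 by norm_num, one_smul]
    simp only [Matrix.mul_assoc]
    rw [cb, cdi, cdi]
    exact cbT1
  refine ⟨p1, p2, p3, p4, ?_⟩
  rw [p1, p2, hBinv, Matrix.mul_smul, Matrix.smul_mul, smul_smul,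
    show (2 : ℝ) * 2⁻¹ = 1 by norm_num, one_smul]
  simp only [Matrix.mul_assoc]
  rw [cb, cbT, cdi, cd]
end
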